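/- arXiv:1808.02124 — 6 statements merged into one kernel-verified Lean document; each statement's English description precedes it below -/
import Mathlib

section
/- Let d ≥ 2 and 1 ≤ p < ∞. There exists a constant N depending only on p such that the following holds. Let B' ⊆ ℝ^{d−1} be measurable, ψ : B' → (0,∞) be measurable, and Ω = {(y', y^d) ∈ ℝ^d : y' ∈ B', 0 < y^d < ψ(y')}. Then for every measurable F : ℝ^d → ℝ with ‖F‖_{L_p(Ω)} < ∞, the function W(y', y^d) := ∫_0^{y^d} F(y', t)/(ψ(y') − t) dt satisfies ‖W‖_{L_p(Ω)} ≤ N ‖F‖_{L_p(Ω)}. -/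
/-
On the fiber over `y'` put `b = ψ y'`. The reflection `t ↦ b - t` turns `W(y', ·)` into the
dual Hardy operator `g ↦ ∫_u^∞ g(τ)/τ dτ` applied to the reflected `F(y', ·)`, extended by zero.
The dual Hardy inequality `‖∫_u^∞ g(τ)/τ dτ‖_{L_p(0,∞)} ≤ p ‖g‖_{L_p(0,∞)}` is the Schur test
with the weight `τ^{-1/(p p')}` (for `p = 1` it is Tonelli's theorem). Integrating the fiberwise
bound over `B'` gives the estimate with `N = p`.
-/

open MeasureTheory
open Set Function
open scoped ENNReal

section SchurTest

variable {α β : Type*} [MeasurableSpace α] [MeasurableSpace β] {μ : Measure α} {ν : Measure β}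
  {p q : ℝ}

theorem lintegral_mul_lintegral_le_of_ae_lintegral_le [SFinite μ] [SFinite ν]
    {K : α → β → ℝ≥0∞} (hK : Measurable (uncurry K)) {v : α → ℝ≥0∞} {w g : β → ℝ≥0∞}
    (hv : Measurable v) (hw : Measurable w) (hg : Measurable g) {C : ℝ≥0∞}
    (hKv : ∀ᵐ t ∂ν, ∫⁻ s, K s t * v s ∂μ ≤ C * w t) :
    ∫⁻ s, v s * ∫⁻ t, K s t * g t ∂ν ∂μ ≤ C * ∫⁻ t, w t * g t ∂ν := by
  calc ∫⁻ s, v s * ∫⁻ t, K s t * g t ∂ν ∂μ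
      = ∫⁻ t, (∫⁻ s, K s t * v s ∂μ) * g t ∂ν := by
        have hKt : ∀ t, Measurable fun s => K s t * v s := fun t =>
          (hK.comp (measurable_id.prodMk measurable_const)).mul hv
        have hKs : ∀ s, Measurable fun t => K s t * g t := fun s =>
          (hK.comp (measurable_const.prodMk measurable_id)).mul hg
        simp_rw [← lintegral_const_mul _ (hKs _), ← lintegral_mul_const _ (hKt _)]
        refine lintegral_lintegral_swap (((hv.comp measurable_fst).mul
          (hK.mul (hg.comp measurable_snd))).aemeasurable) |>.trans ?_
        simp only [mul_comm, mul_left_comm]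
    _ ≤ ∫⁻ t, C * w t * g t ∂ν := lintegral_mono_ae (by
        filter_upwards [hKv] with t ht using mul_le_mul_left ht _)
    _ = C * ∫⁻ t, w t * g t ∂ν := by
        simp_rw [mul_assoc]; exact lintegral_const_mul _ (hw.mul hg)

theorem ENNReal.lintegral_rpow_le_lintegral_div_rpow_mul (ρ : Measure α)
    (hpq : p.HolderConjugate q) {f w : α → ℝ≥0∞} (hf : AEMeasurable f ρ) (hw : AEMeasurable w ρ)
    (hw_pos : ∀ᵐ t ∂ρ, w t ≠ 0) (hw_fin : ∀ᵐ t ∂ρ, w t ≠ ∞) :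
    (∫⁻ t, f t ∂ρ) ^ p ≤ (∫⁻ t, (f t / w t) ^ p ∂ρ) * (∫⁻ t, w t ^ q ∂ρ) ^ (p / q) := by
  have hp := hpq.pos
  have hf_eq : ∫⁻ t, f t ∂ρ = ∫⁻ t, (f / w * w) t ∂ρ := by
    refine lintegral_congr_ae ?_
    filter_upwards [hw_pos, hw_fin] with t h0 htop
    exact (ENNReal.div_mul_cancel h0 htop).symm
  calc (∫⁻ t, f t ∂ρ) ^ p
      ≤ ((∫⁻ t, (f t / w t) ^ p ∂ρ) ^ (1 / p) * (∫⁻ t, w t ^ q ∂ρ) ^ (1 / q)) ^ p := by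
        rw [hf_eq]
        gcongr
        exact ENNReal.lintegral_mul_le_Lp_mul_Lq ρ hpq (hf.div hw) hw
    _ = (∫⁻ t, (f t / w t) ^ p ∂ρ) * (∫⁻ t, w t ^ q ∂ρ) ^ (p / q) := by
        rw [ENNReal.mul_rpow_of_nonneg _ _ hp.le, ← ENNReal.rpow_mul, ← ENNReal.rpow_mul,
          one_div_mul_cancel hp.ne', ENNReal.rpow_one, one_div_mul_eq_div]

theorem lintegral_rpow_lintegral_mul_le_of_schur [SFinite μ] [SFinite ν]
    (hpq : p.HolderConjugate q) {K : α → β → ℝ≥0∞} (hK : Measurable (uncurry K))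
    {v : α → ℝ≥0∞} {w : β → ℝ≥0∞} (hv : Measurable v) (hw : Measurable w)
    (hw_pos : ∀ᵐ t ∂ν, w t ≠ 0) (hw_fin : ∀ᵐ t ∂ν, w t ≠ ∞) {C₁ C₂ : ℝ≥0∞}
    (h₁ : ∀ᵐ s ∂μ, ∫⁻ t, K s t * w t ^ q ∂ν ≤ C₁ * v s ^ q)
    (h₂ : ∀ᵐ t ∂ν, ∫⁻ s, K s t * v s ^ p ∂μ ≤ C₂ * w t ^ p)
    {f : β → ℝ≥0∞} (hf : Measurable f) :
    ∫⁻ s, (∫⁻ t, K s t * f t ∂ν) ^ p ∂μ ≤ C₁ ^ (p / q) * C₂ * ∫⁻ t, f t ^ p ∂ν := by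
  have hp := hpq.pos
  have hq := hpq.symm.pos
  have hKs : ∀ s, Measurable (K s) := fun s => hK.comp (measurable_const.prodMk measurable_id)
  have holder : ∀ᵐ s ∂μ, (∫⁻ t, K s t * f t ∂ν) ^ p
      ≤ C₁ ^ (p / q) * (v s ^ p * ∫⁻ t, K s t * (f t / w t) ^ p ∂ν) := by
    filter_upwards [h₁] with s hs
    have hac := withDensity_absolutelyContinuous ν (K s)
    have hρ : ∀ {g : β → ℝ≥0∞}, Measurable g →
        ∫⁻ t, K s t * g t ∂ν = ∫⁻ t, g t ∂ν.withDensity (K s) := fun hg =>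
      (lintegral_withDensity_eq_lintegral_mul _ (hKs s) hg).symm
    rw [hρ (hw.pow_const q)] at hs
    rw [hρ hf, hρ (g := fun t => (f t / w t) ^ p) ((hf.div hw).pow_const p)]
    refine (ENNReal.lintegral_rpow_le_lintegral_div_rpow_mul _ hpq hf.aemeasurable
      hw.aemeasurable (hac.ae_le hw_pos) (hac.ae_le hw_fin)).trans ?_
    calc _ ≤ (∫⁻ t, (f t / w t) ^ p ∂ν.withDensity (K s)) * (C₁ * v s ^ q) ^ (p / q) := by
          gcongr
      _ = C₁ ^ (p / q) * (v s ^ p * ∫⁻ t, (f t / w t) ^ p ∂ν.withDensity (K s)) := by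
        rw [ENNReal.mul_rpow_of_nonneg _ _ (div_pos hp hq).le, ← ENNReal.rpow_mul,
          mul_div_cancel₀ _ hq.ne']
        ring
  calc ∫⁻ s, (∫⁻ t, K s t * f t ∂ν) ^ p ∂μ
      ≤ ∫⁻ s, C₁ ^ (p / q) * (v s ^ p * ∫⁻ t, K s t * (f t / w t) ^ p ∂ν) ∂μ :=
        lintegral_mono_ae holder
    _ = C₁ ^ (p / q) * ∫⁻ s, v s ^ p * ∫⁻ t, K s t * (f t / w t) ^ p ∂ν ∂μ :=
        lintegral_const_mul _ ((hv.pow_const p).mul (Measurable.lintegral_prod_right'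
          (f := uncurry fun s t => K s t * (f t / w t) ^ p)
          (hK.mul (((hf.div hw).pow_const p).comp measurable_snd))))
    _ ≤ C₁ ^ (p / q) * (C₂ * ∫⁻ t, w t ^ p * (f t / w t) ^ p ∂ν) := by
        gcongr
        exact lintegral_mul_lintegral_le_of_ae_lintegral_le hK (hv.pow_const p) (hw.pow_const p)
          ((hf.div hw).pow_const p) h₂
    _ = C₁ ^ (p / q) * C₂ * ∫⁻ t, f t ^ p ∂ν := by
        rw [mul_assoc]
        congr 2
        refine lintegral_congr_ae ?_
        filter_upwards [hw_pos, hw_fin] with t h0 htop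
        rw [← ENNReal.mul_rpow_of_nonneg _ _ hp.le, ENNReal.mul_div_cancel h0 htop]

end SchurTest

theorem setLIntegral_Ioi_ofReal_rpow_neg_div {r u : ℝ} (hr : 0 < r) (hu : 0 < u) :
    ∫⁻ τ in Ioi u, ENNReal.ofReal τ ^ (-r) / ENNReal.ofReal τ
      = ENNReal.ofReal r⁻¹ * ENNReal.ofReal u ^ (-r) := by
  have hpow : ∀ τ ∈ Ioi u, ENNReal.ofReal τ ^ (-r) / ENNReal.ofReal τ
      = ENNReal.ofReal (τ ^ (-r - 1)) := fun τ hτ => by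
    have hτ : 0 < τ := hu.trans hτ
    rw [ENNReal.ofReal_rpow_of_pos hτ, ← ENNReal.ofReal_div_of_pos hτ,
      Real.rpow_sub_one hτ.ne']
  have hint := integrableOn_Ioi_rpow_of_lt (by linarith : -r - 1 < -1) hu
  rw [setLIntegral_congr_fun measurableSet_Ioi hpow, ← ofReal_integral_eq_lintegral_ofReal hint
    (ae_restrict_of_forall_mem measurableSet_Ioi fun τ hτ =>
      (Real.rpow_pos_of_pos (hu.trans hτ) _).le),
    integral_Ioi_rpow_of_lt (by linarith) hu, ENNReal.ofReal_rpow_of_pos hu,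
    ← ENNReal.ofReal_mul (inv_nonneg.2 hr.le)]
  congr 1
  rw [sub_add_cancel, neg_div, div_neg, neg_neg, div_eq_inv_mul]

theorem setLIntegral_Ioo_zero_ofReal_rpow_neg_div {r τ : ℝ} (hr : r < 1) (hτ : 0 < τ) :
    (∫⁻ u in Ioo 0 τ, ENNReal.ofReal u ^ (-r)) / ENNReal.ofReal τ
      = ENNReal.ofReal (1 - r)⁻¹ * ENNReal.ofReal τ ^ (-r) := by
  have hpow : ∀ u ∈ Ioo 0 τ, ENNReal.ofReal u ^ (-r) = ENNReal.ofReal (u ^ (-r)) :=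
    fun u hu => ENNReal.ofReal_rpow_of_pos hu.1
  have hint : IntegrableOn (fun u : ℝ => u ^ (-r)) (Ioo 0 τ) :=
    ((intervalIntegral.intervalIntegrable_rpow' (by linarith)).1).mono_set Ioo_subset_Ioc_self
  rw [setLIntegral_congr_fun measurableSet_Ioo hpow, ← ofReal_integral_eq_lintegral_ofReal hint
    (ae_restrict_of_forall_mem measurableSet_Ioo fun u hu => (Real.rpow_pos_of_pos hu.1 _).le),
    ← integral_Ioc_eq_integral_Ioo, ← intervalIntegral.integral_of_le hτ.le,
    integral_rpow (Or.inl (by linarith)), ENNReal.ofReal_rpow_of_pos hτ,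
    ← ENNReal.ofReal_div_of_pos hτ, ← ENNReal.ofReal_mul (inv_nonneg.2 (by linarith))]
  congr 1
  rw [Real.zero_rpow (by linarith), sub_zero, neg_add_eq_sub, Real.rpow_sub hτ, Real.rpow_one,
    Real.rpow_neg hτ.le]
  field_simp

noncomputable def dualHardyKernel (u τ : ℝ) : ℝ≥0∞ :=
  (Ioi u).indicator (fun x => (ENNReal.ofReal x)⁻¹) τ

theorem measurable_uncurry_dualHardyKernel : Measurable (uncurry dualHardyKernel) :=
  (measurable_snd.ennreal_ofReal.inv).indicator (measurableSet_lt measurable_fst measurable_snd)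

theorem setLIntegral_Ioi_dualHardyKernel_mul_eq {u : ℝ} (hu : 0 ≤ u) (F : ℝ → ℝ≥0∞) :
    ∫⁻ τ in Ioi 0, dualHardyKernel u τ * F τ = ∫⁻ τ in Ioi u, F τ / ENNReal.ofReal τ := by
  simp_rw [dualHardyKernel, ← indicator_mul_left]
  rw [setLIntegral_indicator measurableSet_Ioi, inter_eq_left.2 (Ioi_subset_Ioi hu)]
  simp_rw [div_eq_mul_inv, mul_comm]

theorem setLIntegral_Ioi_dualHardyKernel_mul_eq_div {τ : ℝ} (hτ : 0 < τ) (F : ℝ → ℝ≥0∞) :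
    ∫⁻ u in Ioi 0, dualHardyKernel u τ * F u = (∫⁻ u in Ioo 0 τ, F u) / ENNReal.ofReal τ := by
  have : ∀ u, dualHardyKernel u τ * F u
      = (Iio τ).indicator (fun u => F u / ENNReal.ofReal τ) u := fun u => by
    by_cases h : u < τ <;> simp [dualHardyKernel, h, div_eq_mul_inv, mul_comm]
  simp_rw [this]
  rw [setLIntegral_indicator measurableSet_Iio, Iio_inter_Ioi, div_eq_mul_inv,
    ← lintegral_mul_const' _ _ (ENNReal.inv_ne_top.2 (ENNReal.ofReal_pos.2 hτ).ne')]
  simp_rw [div_eq_mul_inv]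

theorem lintegral_Ioi_lintegral_Ioi_div_le {g : ℝ → ℝ≥0∞} (hg : Measurable g) :
    ∫⁻ u in Ioi 0, ∫⁻ τ in Ioi u, g τ / ENNReal.ofReal τ ≤ ∫⁻ τ in Ioi 0, g τ := by
  rw [setLIntegral_congr_fun measurableSet_Ioi fun u (hu : 0 < u) =>
    (setLIntegral_Ioi_dualHardyKernel_mul_eq hu.le g).symm]
  simpa using lintegral_mul_lintegral_le_of_ae_lintegral_le measurable_uncurry_dualHardyKernel
    measurable_const measurable_const hg (C := 1) (v := 1) (w := 1)
    (ae_restrict_of_forall_mem measurableSet_Ioi fun τ (hτ : 0 < τ) => by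
      simpa [ENNReal.div_self (ENNReal.ofReal_pos.2 hτ).ne'] using
        (setLIntegral_Ioi_dualHardyKernel_mul_eq_div hτ 1).le)

theorem lintegral_Ioi_rpow_lintegral_Ioi_div_le_of_holderConjugate {p q : ℝ}
    (hpq : p.HolderConjugate q) {g : ℝ → ℝ≥0∞} (hg : Measurable g) :
    ∫⁻ u in Ioi 0, (∫⁻ τ in Ioi u, g τ / ENNReal.ofReal τ) ^ p
      ≤ ENNReal.ofReal p ^ (p / q) * ENNReal.ofReal p * ∫⁻ τ in Ioi 0, g τ ^ p := by
  rw [setLIntegral_congr_fun measurableSet_Ioi fun u (hu : 0 < u) => by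
    rw [← setLIntegral_Ioi_dualHardyKernel_mul_eq hu.le]]
  -- Schur weights `τ ^ (-1/(pq))`: both kernel integrals are then `p` times the weight.
  set w : ℝ → ℝ≥0∞ := fun τ => ENNReal.ofReal τ ^ (-(p * q)⁻¹)
  have hw : Measurable w := measurable_id.ennreal_ofReal.pow_const _
  have hw_pow : ∀ r τ, w τ ^ r = ENNReal.ofReal τ ^ (-(p * q)⁻¹ * r) := fun r τ =>
    (ENNReal.rpow_mul _ _ _).symm
  have hwq : -(p * q)⁻¹ * q = -p⁻¹ := by field_simp [hpq.symm.ne_zero]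
  have hwp : -(p * q)⁻¹ * p = -q⁻¹ := by field_simp [hpq.ne_zero]
  have h₁ : ∀ᵐ u ∂volume.restrict (Ioi 0), ∫⁻ τ in Ioi 0, dualHardyKernel u τ * w τ ^ q
      ≤ ENNReal.ofReal p * w u ^ q :=
    ae_restrict_of_forall_mem measurableSet_Ioi fun u (hu : 0 < u) => by
      simp_rw [setLIntegral_Ioi_dualHardyKernel_mul_eq hu.le, hw_pow, hwq,
        setLIntegral_Ioi_ofReal_rpow_neg_div (inv_pos.2 hpq.pos) hu, inv_inv, le_refl]
  have h₂ : ∀ᵐ τ ∂volume.restrict (Ioi 0), ∫⁻ u in Ioi 0, dualHardyKernel u τ * w u ^ p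
      ≤ ENNReal.ofReal p * w τ ^ p :=
    ae_restrict_of_forall_mem measurableSet_Ioi fun τ (hτ : 0 < τ) => by
      simp_rw [setLIntegral_Ioi_dualHardyKernel_mul_eq_div hτ, hw_pow, hwp,
        setLIntegral_Ioo_zero_ofReal_rpow_neg_div (inv_lt_one_of_one_lt₀ hpq.symm.lt) hτ,
        hpq.symm.one_sub_inv, inv_inv, le_refl]
  have hw_pos : ∀ᵐ τ ∂volume.restrict (Ioi 0), w τ ≠ 0 :=
    ae_restrict_of_forall_mem measurableSet_Ioi fun τ (hτ : 0 < τ) =>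
      (ENNReal.rpow_pos (ENNReal.ofReal_pos.2 hτ) ENNReal.ofReal_ne_top).ne'
  have hw_fin : ∀ᵐ τ ∂volume.restrict (Ioi 0), w τ ≠ ∞ :=
    ae_restrict_of_forall_mem measurableSet_Ioi fun τ (hτ : 0 < τ) =>
      ENNReal.rpow_ne_top_of_ne_zero (ENNReal.ofReal_pos.2 hτ).ne' ENNReal.ofReal_ne_top
  exact lintegral_rpow_lintegral_mul_le_of_schur hpq measurable_uncurry_dualHardyKernel hw hw
    hw_pos hw_fin h₁ h₂ hg

theorem lintegral_Ioi_rpow_lintegral_Ioi_div_le {p : ℝ} (hp : 1 ≤ p) {g : ℝ → ℝ≥0∞}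
    (hg : Measurable g) :
    ∫⁻ u in Ioi 0, (∫⁻ τ in Ioi u, g τ / ENNReal.ofReal τ) ^ p
      ≤ ENNReal.ofReal p ^ p * ∫⁻ τ in Ioi 0, g τ ^ p := by
  rcases hp.eq_or_lt with rfl | hp
  · simpa using lintegral_Ioi_lintegral_Ioi_div_le hg
  have hpq := Real.HolderConjugate.conjExponent hp
  refine (lintegral_Ioi_rpow_lintegral_Ioi_div_le_of_holderConjugate hpq hg).trans_eq ?_
  congr 1
  calc ENNReal.ofReal p ^ (p / p.conjExponent) * ENNReal.ofReal p
      = ENNReal.ofReal p ^ (p - 1) * ENNReal.ofReal p ^ (1 : ℝ) := by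
        rw [hpq.div_conj_eq_sub_one, ENNReal.rpow_one]
    _ = ENNReal.ofReal p ^ p := by
        rw [← ENNReal.rpow_add_of_nonneg _ _ (sub_nonneg.2 hp.le) zero_le_one, sub_add_cancel]

theorem setLIntegral_Ioo_comp_const_sub (F : ℝ → ℝ≥0∞) (b x y : ℝ) :
    ∫⁻ t in Ioo x y, F (b - t) = ∫⁻ τ in Ioo (b - y) (b - x), F τ := by
  have := (Measure.measurePreserving_sub_left volume b).setLIntegral_comp_preimage_emb
    (Homeomorph.subLeft b).measurableEmbedding F (Ioo (b - y) (b - x))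
  rwa [preimage_const_sub_Ioo, sub_sub_cancel, sub_sub_cancel] at this

theorem lintegral_Ioo_rpow_lintegral_Ioo_div_sub_le {p : ℝ} (hp : 1 ≤ p) (b : ℝ) {f : ℝ → ℝ≥0∞}
    (hf : Measurable f) :
    ∫⁻ s in Ioo 0 b, (∫⁻ t in Ioo 0 s, f t / ENNReal.ofReal (b - t)) ^ p
      ≤ ENNReal.ofReal p ^ p * ∫⁻ t in Ioo 0 b, f t ^ p := by
  set g : ℝ → ℝ≥0∞ := (Ioo 0 b).indicator fun τ => f (b - τ)
  have hg : Measurable g :=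
    (hf.comp (measurable_const.sub measurable_id)).indicator measurableSet_Ioo
  have hg_div : ∀ u, 0 ≤ u → ∫⁻ τ in Ioi u, g τ / ENNReal.ofReal τ
      = ∫⁻ τ in Ioo u b, f (b - τ) / ENNReal.ofReal τ := fun u hu => by
    have : ∀ τ, g τ / ENNReal.ofReal τ
        = (Ioo 0 b).indicator (fun τ => f (b - τ) / ENNReal.ofReal τ) τ := fun τ => by
      by_cases h : τ ∈ Ioo 0 b <;> simp [g, h]
    simp_rw [this]
    rw [setLIntegral_indicator measurableSet_Ioo, Ioo_inter_Ioi, max_eq_right hu]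
  have hg_pow : ∫⁻ τ in Ioi 0, g τ ^ p = ∫⁻ t in Ioo 0 b, f t ^ p := by
    have : ∀ τ, g τ ^ p = (Ioo 0 b).indicator (fun τ => f (b - τ) ^ p) τ := fun τ => by
      by_cases h : τ ∈ Ioo 0 b <;>
        simp [g, h, ENNReal.zero_rpow_of_pos (by linarith : (0 : ℝ) < p)]
    simp_rw [this]
    rw [setLIntegral_indicator measurableSet_Ioo, inter_eq_left.2 Ioo_subset_Ioi_self,
      setLIntegral_Ioo_comp_const_sub (fun t => f t ^ p), sub_self, sub_zero]
  calc ∫⁻ s in Ioo 0 b, (∫⁻ t in Ioo 0 s, f t / ENNReal.ofReal (b - t)) ^ p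
      = ∫⁻ s in Ioo 0 b, (∫⁻ τ in Ioi (b - s), g τ / ENNReal.ofReal τ) ^ p := by
        refine setLIntegral_congr_fun measurableSet_Ioo fun s hs => ?_
        have := setLIntegral_Ioo_comp_const_sub (fun τ => f (b - τ) / ENNReal.ofReal τ) b 0 s
        simp only [sub_sub_cancel, sub_zero] at this
        rw [this, hg_div _ (by linarith [hs.2])]
    _ = ∫⁻ u in Ioo 0 b, (∫⁻ τ in Ioi u, g τ / ENNReal.ofReal τ) ^ p := by
        rw [setLIntegral_Ioo_comp_const_sub
          (fun u => (∫⁻ τ in Ioi u, g τ / ENNReal.ofReal τ) ^ p), sub_self, sub_zero]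
    _ ≤ ∫⁻ u in Ioi 0, (∫⁻ τ in Ioi u, g τ / ENNReal.ofReal τ) ^ p :=
        lintegral_mono_set Ioo_subset_Ioi_self
    _ ≤ ENNReal.ofReal p ^ p * ∫⁻ t in Ioo 0 b, f t ^ p := by
        rw [← hg_pow]; exact lintegral_Ioi_rpow_lintegral_Ioi_div_le hp hg

theorem enorm_setIntegral_Ioo_div_sub_le {h : ℝ → ℝ} {b y : ℝ} (hy : y ≤ b) :
    ‖∫ t in Ioo 0 y, h t / (b - t)‖ₑ ≤ ∫⁻ t in Ioo 0 y, ‖h t‖ₑ / ENNReal.ofReal (b - t) :=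
  (enorm_integral_le_lintegral_enorm _).trans_eq <| setLIntegral_congr_fun measurableSet_Ioo
    fun t ht => by
      have hbt : 0 < b - t := by linarith [ht.2]
      rw [div_eq_mul_inv, enorm_mul, enorm_inv hbt.ne', Real.enorm_eq_ofReal hbt.le,
        div_eq_mul_inv]

theorem lintegral_indicator_regionBetween_apply {α : Type*} {ν : Measure ℝ} {f g : α → ℝ}
    {s : Set α} (G : α × ℝ → ℝ≥0∞) (x : α) :
    ∫⁻ y, (regionBetween f g s).indicator G (x, y) ∂ν
      = s.indicator (fun x => ∫⁻ y in Ioo (f x) (g x), G (x, y) ∂ν) x := by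
  by_cases hx : x ∈ s
  · rw [indicator_of_mem hx, ← lintegral_indicator measurableSet_Ioo]
    congr 1 with y
    by_cases hy : y ∈ Ioo (f x) (g x)
    · have hxy : (x, y) ∈ regionBetween f g s := ⟨hx, hy⟩
      rw [indicator_of_mem hy, indicator_of_mem hxy]
    · rw [indicator_of_notMem hy, indicator_of_notMem fun h => hy h.2]
  · simp [regionBetween, indicator, hx]

section RegionBetween

variable {α : Type*} [MeasurableSpace α] {μ : Measure α}

theorem setLIntegral_regionBetween_le {ν : Measure ℝ} [SFinite ν] {f g : α → ℝ}
    (hf : Measurable f) (hg : Measurable g) {s : Set α} (hs : MeasurableSet s) (G : α × ℝ → ℝ≥0∞) :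
    ∫⁻ z in regionBetween f g s, G z ∂μ.prod ν
      ≤ ∫⁻ x in s, ∫⁻ y in Ioo (f x) (g x), G (x, y) ∂ν ∂μ := by
  rw [← lintegral_indicator (measurableSet_regionBetween hf hg hs), ← lintegral_indicator hs]
  refine (lintegral_prod_le _).trans_eq ?_
  simp_rw [lintegral_indicator_regionBetween_apply]

theorem setLIntegral_regionBetween [SFinite μ] {ν : Measure ℝ} [SFinite ν] {f g : α → ℝ}
    (hf : Measurable f) (hg : Measurable g) {s : Set α} (hs : MeasurableSet s)
    {G : α × ℝ → ℝ≥0∞} (hG : Measurable G) :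
    ∫⁻ z in regionBetween f g s, G z ∂μ.prod ν
      = ∫⁻ x in s, ∫⁻ y in Ioo (f x) (g x), G (x, y) ∂ν ∂μ := by
  rw [← lintegral_indicator (measurableSet_regionBetween hf hg hs), ← lintegral_indicator hs,
    lintegral_prod _ (hG.indicator (measurableSet_regionBetween hf hg hs)).aemeasurable]
  simp_rw [lintegral_indicator_regionBetween_apply]

theorem setLIntegral_regionBetween_rpow_enorm_le [SFinite μ] {p : ℝ} (hp : 1 ≤ p) {s : Set α}
    (hs : MeasurableSet s) {ψ : α → ℝ} (hψ : Measurable ψ) {F : α × ℝ → ℝ} (hF : Measurable F) :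
    ∫⁻ y in regionBetween 0 ψ s, ‖∫ t in Ioo 0 y.2, F (y.1, t) / (ψ y.1 - t)‖ₑ ^ p
        ∂μ.prod volume
      ≤ ENNReal.ofReal p ^ p * ∫⁻ y in regionBetween 0 ψ s, ‖F y‖ₑ ^ p ∂μ.prod volume := by
  have hp0 : 0 ≤ p := by linarith
  calc _ ≤ ∫⁻ x in s, (∫⁻ y in Ioo 0 (ψ x), ‖∫ t in Ioo 0 y, F (x, t) / (ψ x - t)‖ₑ ^ p) ∂μ :=
        setLIntegral_regionBetween_le measurable_zero hψ hs _
    _ ≤ ∫⁻ x in s, (∫⁻ y in Ioo 0 (ψ x),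
          (∫⁻ t in Ioo 0 y, ‖F (x, t)‖ₑ / ENNReal.ofReal (ψ x - t)) ^ p) ∂μ :=
        lintegral_mono fun x => setLIntegral_mono' measurableSet_Ioo fun y hy => by
          gcongr; exact enorm_setIntegral_Ioo_div_sub_le hy.2.le
    _ ≤ ∫⁻ x in s, ENNReal.ofReal p ^ p * (∫⁻ t in Ioo 0 (ψ x), ‖F (x, t)‖ₑ ^ p) ∂μ :=
        lintegral_mono fun x =>
          lintegral_Ioo_rpow_lintegral_Ioo_div_sub_le hp _ (hF.comp measurable_prodMk_left).enorm
    _ = ENNReal.ofReal p ^ p * ∫⁻ y in regionBetween 0 ψ s, ‖F y‖ₑ ^ p ∂μ.prod volume := by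
        rw [lintegral_const_mul' _ _ (ENNReal.rpow_ne_top_of_nonneg hp0 ENNReal.ofReal_ne_top),
          setLIntegral_regionBetween measurable_zero hψ hs (hF.enorm.pow_const p)]
        simp only [Pi.zero_apply]

end RegionBetween

/-- Fiberwise dual-Hardy estimate in a subgraph region (used in Theorem 4.5):
for `1 ≤ p < ∞` there is `N = N(p)` such that for any `d ≥ 2`, any measurable
`B' ⊆ ℝ^{d-1}`, any measurable `ψ : B' → (0,∞)` with subgraph region
`Ω = {(y', y^d) : y' ∈ B', 0 < y^d < ψ(y')}`, and any measurable `F` with finite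
`L_p(Ω)` norm, the function `W(y', y^d) = ∫_0^{y^d} F(y',t)/(ψ(y') - t) dt`
satisfies `‖W‖_{L_p(Ω)} ≤ N ‖F‖_{L_p(Ω)}`. -/
theorem fiberwise_dual_hardy (p : ℝ) (hp : 1 ≤ p) :
    ∃ N : ℝ, 0 < N ∧
      ∀ (d : ℕ), 2 ≤ d →
        ∀ (B' : Set (EuclideanSpace ℝ (Fin (d - 1))))
          (ψ : EuclideanSpace ℝ (Fin (d - 1)) → ℝ),
          MeasurableSet B' → Measurable ψ → (∀ y' ∈ B', 0 < ψ y') →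
          ∀ (Ω : Set (EuclideanSpace ℝ (Fin (d - 1)) × ℝ)),
            Ω = {y | y.1 ∈ B' ∧ 0 < y.2 ∧ y.2 < ψ y.1} →
            ∀ F : EuclideanSpace ℝ (Fin (d - 1)) × ℝ → ℝ,
              Measurable F →
              eLpNorm F (ENNReal.ofReal p) (volume.restrict Ω) < ⊤ →
              eLpNorm (fun y => ∫ t in Set.Ioo (0:ℝ) y.2, F (y.1, t) / (ψ y.1 - t))
                  (ENNReal.ofReal p) (volume.restrict Ω)
                ≤ ENNReal.ofReal N * eLpNorm F (ENNReal.ofReal p) (volume.restrict Ω) := by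
  refine ⟨p, by linarith, fun d _ B' ψ hB' hψ _ Ω hΩ F hF _ => ?_⟩
  have hp0 : 0 < p := by linarith
  have hΩ' : Ω = regionBetween 0 ψ B' := hΩ
  rw [eLpNorm_eq_lintegral_rpow_enorm_toReal (by simpa using hp0) ENNReal.ofReal_ne_top,
    eLpNorm_eq_lintegral_rpow_enorm_toReal (by simpa using hp0) ENNReal.ofReal_ne_top,
    ENNReal.toReal_ofReal hp0.le, hΩ', Measure.volume_eq_prod]
  calc _ ≤ (ENNReal.ofReal p ^ p * ∫⁻ y in regionBetween 0 ψ B', ‖F y‖ₑ ^ p ∂volume.prod volume)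
        ^ (1 / p) := by
        gcongr
        exact setLIntegral_regionBetween_rpow_enorm_le hp hB' hψ hF
    _ = _ := by
        rw [ENNReal.mul_rpow_of_nonneg _ _ (by positivity), ← ENNReal.rpow_mul,
          mul_one_div_cancel hp0.ne', ENNReal.rpow_one]
end

section
/- Let d ≥ 1, 1 ≤ p < ∞, and M₁ > 0. Let ρ : ℝ^d → ℝ be differentiable with ‖Dρ(y)‖ ≤ M₁/2 for all y ∈ ℝ^d. Let A, A' ⊆ ℝ^d be measurable sets such that y − (ρ(y)/M₁) w ∈ A' for every y ∈ A and every w in the closed unit ball B₁ ⊆ ℝ^d. Let φ : ℝ^d → [0,∞) be integrable with support contained in B₁, and let g : ℝ^d → ℝ be measurable with ‖g‖_{L_p(A')} < ∞. Then the mollification g̃(y) := ∫_{B₁} g(y − (ρ(y)/M₁) w) φ(w) dw satisfies ‖g̃‖_{L_p(A)} ≤ 2^{1/p} ‖φ‖_{L_1(ℝ^d)} ‖g‖_{L_p(A')}. -/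
/-!
Write `g̃ y = ∫ g (T_w y) φ w dw` with `T_w y = y - (ρ y / M₁) • w`. For fixed `w ∈ B₁` the map
`T_w` is injective (its perturbation of the identity is `1/2`-Lipschitz) and, by the matrix
determinant lemma, its Jacobian `1 - Dρ(y) w / M₁` is at least `1/2`; the change of variables
formula therefore gives `‖g ∘ T_w‖_{L_p(A)} ≤ 2^{1/p} ‖g‖_{L_p(A')}` uniformly in `w`. Jensen's
inequality for the weight `|φ|` and Tonelli's theorem turn this uniform bound into the bound for
`g̃`, a special case of Minkowski's integral inequality.
-/

open MeasureTheory ENNReal Set Function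
open scoped NNReal

theorem ContinuousLinearMap.det_id_sub_smulRight {R M : Type*} [CommRing R] [TopologicalSpace R]
    [TopologicalSpace M] [AddCommGroup M] [IsTopologicalAddGroup M] [Module R M]
    [ContinuousSMul R M] [Module.Free R M] [Module.Finite R M] (f : M →L[R] R) (w : M) :
    (ContinuousLinearMap.id R M - f.smulRight w).det = 1 - f w := by
  classical
  let b := Module.Free.chooseBasis R M
  have hmatrix : LinearMap.toMatrix b b (ContinuousLinearMap.id R M - f.smulRight w : M →L[R] M)
      = 1 - Matrix.replicateCol Unit (b.repr w) * Matrix.replicateRow Unit (fun j => f (b j)) := by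
    ext i j
    simp [LinearMap.toMatrix_apply, Matrix.one_apply, Finsupp.single_apply, Matrix.mul_apply,
      mul_comm, eq_comm]
  rw [ContinuousLinearMap.det, ← LinearMap.det_toMatrix b, hmatrix, Matrix.det_one_sub_mul_comm,
    Matrix.det_unique]
  conv_rhs => rw [← b.sum_repr w, map_sum]
  simp [Matrix.mul_apply, mul_comm]

/-- Jensen's inequality for `t ↦ t ^ p` and the measure with density `G`, obtained from Hölder. -/
theorem ENNReal.rpow_lintegral_mul_le {α : Type*} [MeasurableSpace α] {μ : Measure α} {p : ℝ}
    (hp : 1 ≤ p) {F G : α → ℝ≥0∞} (hF : AEMeasurable F μ) (hG : AEMeasurable G μ) :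
    (∫⁻ a, F a * G a ∂μ) ^ p ≤ (∫⁻ a, G a ∂μ) ^ (p - 1) * ∫⁻ a, F a ^ p * G a ∂μ := by
  have hp0 : 0 < p := by linarith
  have hq : 0 ≤ 1 - 1 / p := sub_nonneg.mpr (div_le_one_of_le₀ hp hp0.le)
  have hholder := ENNReal.lintegral_mul_norm_pow_le ((hF.pow_const p).mul hG) hG
    (by positivity) hq (add_sub_cancel (1 / p) 1)
  have hpoint : ∀ a, (F a ^ p * G a) ^ (1 / p) * G a ^ (1 - 1 / p) = F a * G a := fun a => by
    rw [mul_rpow_of_nonneg _ _ (by positivity), ← rpow_mul, mul_one_div_cancel hp0.ne', rpow_one,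
      mul_assoc, ← rpow_add_of_nonneg _ _ (by positivity) hq, add_sub_cancel, rpow_one]
  simp only [Pi.mul_apply, hpoint] at hholder
  calc (∫⁻ a, F a * G a ∂μ) ^ p
      ≤ ((∫⁻ a, F a ^ p * G a ∂μ) ^ (1 / p) * (∫⁻ a, G a ∂μ) ^ (1 - 1 / p)) ^ p :=
        rpow_le_rpow hholder hp0.le
    _ = (∫⁻ a, G a ∂μ) ^ (p - 1) * ∫⁻ a, F a ^ p * G a ∂μ := by
        rw [mul_rpow_of_nonneg _ _ hp0.le, ← rpow_mul, ← rpow_mul, one_div_mul_cancel hp0.ne',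
          rpow_one, mul_comm, sub_mul, one_div_mul_cancel hp0.ne', one_mul]

theorem eLpNorm_integral_mul_le_of_ae_eLpNorm_le {α β : Type*} [MeasurableSpace α]
    [MeasurableSpace β] {μ : Measure α} {ν : Measure β} [SFinite μ] [SFinite ν] {p : ℝ≥0∞}
    (hp : 1 ≤ p) (hp' : p ≠ ∞) {G : α → β → ℝ} (hG : Measurable (uncurry G)) {φ : β → ℝ}
    (hφ : AEMeasurable φ ν) {C : ℝ≥0∞} (hC : ∀ᵐ w ∂ν, eLpNorm (G · w) p μ ≤ C) :
    eLpNorm (fun y => ∫ w, G y w * φ w ∂ν) p μ ≤ C * eLpNorm φ 1 ν := by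
  set q := p.toReal
  have hq : 1 ≤ q := by simpa using ENNReal.toReal_mono hp' hp
  have hq0 : 0 < q := by linarith
  set Φ := ∫⁻ w, ‖φ w‖ₑ ∂ν
  have hGq : Measurable (uncurry fun y w => ‖G y w‖ₑ ^ q) := hG.enorm.pow_const q
  have hprod : AEMeasurable (uncurry fun y w => ‖G y w‖ₑ ^ q * ‖φ w‖ₑ) (μ.prod ν) :=
    hGq.aemeasurable.mul hφ.enorm.comp_snd
  have hpointwise (y : α) :
      ‖∫ w, G y w * φ w ∂ν‖ₑ ^ q ≤ Φ ^ (q - 1) * ∫⁻ w, ‖G y w‖ₑ ^ q * ‖φ w‖ₑ ∂ν :=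
    calc ‖∫ w, G y w * φ w ∂ν‖ₑ ^ q ≤ (∫⁻ w, ‖G y w‖ₑ * ‖φ w‖ₑ ∂ν) ^ q := by
          simp_rw [← enorm_mul]
          exact rpow_le_rpow (enorm_integral_le_lintegral_enorm _) hq0.le
      _ ≤ _ := rpow_lintegral_mul_le hq (hG.comp measurable_prodMk_left).enorm.aemeasurable
          hφ.enorm
  have hsection : ∀ᵐ w ∂ν, ∫⁻ y, ‖G y w‖ₑ ^ q ∂μ ≤ C ^ q := hC.mono fun w hw => by
    rw [eLpNorm_eq_lintegral_rpow_enorm_toReal (by positivity) hp'] at hw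
    have := rpow_le_rpow hw hq0.le
    rwa [← rpow_mul, one_div_mul_cancel hq0.ne', rpow_one] at this
  have hlintegral : ∫⁻ y, ‖∫ w, G y w * φ w ∂ν‖ₑ ^ q ∂μ ≤ C ^ q * Φ ^ q :=
    calc ∫⁻ y, ‖∫ w, G y w * φ w ∂ν‖ₑ ^ q ∂μ
        ≤ ∫⁻ y, Φ ^ (q - 1) * ∫⁻ w, ‖G y w‖ₑ ^ q * ‖φ w‖ₑ ∂ν ∂μ := lintegral_mono hpointwise
      _ = Φ ^ (q - 1) * ∫⁻ w, (∫⁻ y, ‖G y w‖ₑ ^ q ∂μ) * ‖φ w‖ₑ ∂ν := by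
        rw [lintegral_const_mul'' _ hprod.lintegral_prod_right, lintegral_lintegral_swap hprod]
        simp_rw [lintegral_mul_const' _ _ enorm_ne_top]
      _ ≤ Φ ^ (q - 1) * ∫⁻ w, C ^ q * ‖φ w‖ₑ ∂ν := by
        gcongr 1
        exact lintegral_mono_ae (hsection.mono fun w hw => mul_le_mul_left hw _)
      _ = C ^ q * Φ ^ q := by
        rw [lintegral_const_mul'' _ hφ.enorm, mul_left_comm]
        congr 1
        conv_rhs => rw [← sub_add_cancel q 1, rpow_add_of_nonneg _ _ (by linarith) zero_le_one,
          rpow_one]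
  rw [eLpNorm_eq_lintegral_rpow_enorm_toReal (by positivity) hp', eLpNorm_one_eq_lintegral_enorm]
  calc _ ≤ (C ^ q * Φ ^ q) ^ (1 / q) := rpow_le_rpow hlintegral (by positivity)
    _ = C * Φ := by
      rw [mul_rpow_of_nonneg _ _ (by positivity), ← rpow_mul, ← rpow_mul,
        mul_one_div_cancel hq0.ne', rpow_one, rpow_one]

theorem eLpNorm_le_rpow_mul_eLpNorm_of_lintegral_le {α β ε ε' : Type*} [MeasurableSpace α]
    [MeasurableSpace β] [ENorm ε] [ENorm ε'] {μ : Measure α} {ν : Measure β} {p : ℝ≥0∞}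
    (hp0 : p ≠ 0) (hp : p ≠ ∞) {f : α → ε} {g : β → ε'} {c : ℝ≥0∞}
    (h : ∫⁻ x, ‖f x‖ₑ ^ p.toReal ∂μ ≤ c * ∫⁻ y, ‖g y‖ₑ ^ p.toReal ∂ν) :
    eLpNorm f p μ ≤ c ^ (1 / p.toReal) * eLpNorm g p ν := by
  rw [eLpNorm_eq_lintegral_rpow_enorm_toReal hp0 hp, eLpNorm_eq_lintegral_rpow_enorm_toReal hp0 hp,
    ← mul_rpow_of_nonneg _ _ (by positivity)]
  exact rpow_le_rpow h (by positivity)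

theorem norm_fderiv_div_const {E : Type*} [NormedAddCommGroup E] [NormedSpace ℝ E] {ρ : E → ℝ}
    {y : E} (hρ : DifferentiableAt ℝ ρ y) (M : ℝ) :
    ‖fderiv ℝ (fun y => ρ y / M) y‖ = ‖fderiv ℝ ρ y‖ / |M| := by
  simp_rw [div_eq_inv_mul]
  rw [(hρ.hasFDerivAt.const_mul M⁻¹).fderiv, norm_smul, norm_inv, Real.norm_eq_abs]

theorem injective_sub_smul_of_lipschitzWith {E : Type*} [NormedAddCommGroup E] [NormedSpace ℝ E]
    {ψ : E → ℝ} {K : ℝ≥0} (hψ : LipschitzWith K ψ) {w : E} (hKw : K * ‖w‖₊ < 1) :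
    Injective fun y => y - ψ y • w := by
  have hlip : LipschitzWith (‖w‖₊ * K) fun y => -(ψ y • w) := by
    have := ((ContinuousLinearMap.toSpanSingleton ℝ w).lipschitz.comp hψ).neg
    rwa [ContinuousLinearMap.nnnorm_toSpanSingleton] at this
  simpa [sub_eq_add_neg] using
    (AntilipschitzWith.id.add_lipschitzWith hlip (by simpa [mul_comm] using hKw)).injective

section ChangeOfVariables

variable {E : Type*} [NormedAddCommGroup E] [NormedSpace ℝ E] [FiniteDimensional ℝ E]
  [MeasurableSpace E] [BorelSpace E] {μ : Measure E} [μ.IsAddHaarMeasure]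

theorem ofReal_mul_setLIntegral_comp_le_of_le_abs_det {f : E → E} {f' : E → E →L[ℝ] E}
    {s : Set E} {c : ℝ} (hs : MeasurableSet s) (hf' : ∀ x ∈ s, HasFDerivWithinAt f (f' x) s x)
    (hf : InjOn f s) (hc : ∀ x ∈ s, c ≤ |(f' x).det|) (g : E → ℝ≥0∞) :
    ENNReal.ofReal c * ∫⁻ x in s, g (f x) ∂μ ≤ ∫⁻ y in f '' s, g y ∂μ := by
  rw [lintegral_image_eq_lintegral_abs_det_fderiv_mul μ hs hf' hf,
    ← lintegral_const_mul' _ _ ofReal_ne_top]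
  exact setLIntegral_mono' hs fun x hx => mul_le_mul_left (ofReal_le_ofReal (hc x hx)) _

theorem ofReal_mul_setLIntegral_comp_sub_smul_le {ψ : E → ℝ} {K : ℝ≥0}
    (hψ : Differentiable ℝ ψ) (hψK : ∀ y, ‖fderiv ℝ ψ y‖₊ ≤ K) (hK : K < 1) {w : E}
    (hw : ‖w‖ ≤ 1) {s t : Set E} (hs : MeasurableSet s)
    (hst : MapsTo (fun y => y - ψ y • w) s t) (g : E → ℝ≥0∞) :
    ENNReal.ofReal (1 - K) * ∫⁻ y in s, g (y - ψ y • w) ∂μ ≤ ∫⁻ x in t, g x ∂μ := by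
  have hderiv (y : E) : HasFDerivAt (fun y => y - ψ y • w)
      (ContinuousLinearMap.id ℝ E - (fderiv ℝ ψ y).smulRight w) y :=
    (hasFDerivAt_id y).sub ((hψ y).hasFDerivAt.smul_const w)
  have hdet (y : E) :
      1 - K ≤ |(ContinuousLinearMap.id ℝ E - (fderiv ℝ ψ y).smulRight w).det| := by
    have hKw : fderiv ℝ ψ y w ≤ K :=
      calc fderiv ℝ ψ y w ≤ ‖fderiv ℝ ψ y‖ * ‖w‖ :=
            (le_abs_self _).trans ((fderiv ℝ ψ y).le_opNorm w)
        _ ≤ K * 1 := mul_le_mul (hψK y) hw (norm_nonneg _) K.coe_nonneg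
        _ = K := mul_one _
    rw [ContinuousLinearMap.det_id_sub_smulRight]
    exact (sub_le_sub_left hKw 1).trans (le_abs_self _)
  have hinj : Injective fun y => y - ψ y • w :=
    injective_sub_smul_of_lipschitzWith (lipschitzWith_of_nnnorm_fderiv_le hψ hψK)
      ((mul_le_of_le_one_right zero_le (by simpa [← NNReal.coe_le_coe] using hw)).trans_lt hK)
  calc _ ≤ ∫⁻ x in (fun y => y - ψ y • w) '' s, g x ∂μ :=
        ofReal_mul_setLIntegral_comp_le_of_le_abs_det hs (fun y _ => (hderiv y).hasFDerivWithinAt)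
          hinj.injOn (fun y _ => hdet y) g
    _ ≤ ∫⁻ x in t, g x ∂μ := lintegral_mono_set hst.image_subset

end ChangeOfVariables

theorem mollification_Lp_bound_general (d : ℕ) (p : ℝ) (hp : 1 ≤ p)
    (M₁ : ℝ) (hM₁ : 0 < M₁)
    (ρ : EuclideanSpace ℝ (Fin d) → ℝ) (hρ : Differentiable ℝ ρ)
    (hρ' : ∀ y, ‖fderiv ℝ ρ y‖ ≤ M₁ / 2)
    (A A' : Set (EuclideanSpace ℝ (Fin d)))
    (hA : MeasurableSet A)
    (hAA' : ∀ y ∈ A, ∀ w ∈ Metric.closedBall (0 : EuclideanSpace ℝ (Fin d)) 1,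
      y - (ρ y / M₁) • w ∈ A')
    (φ : EuclideanSpace ℝ (Fin d) → ℝ) (hφint : Integrable φ)
    (hφsupp : Function.support φ ⊆ Metric.closedBall (0 : EuclideanSpace ℝ (Fin d)) 1)
    (g : EuclideanSpace ℝ (Fin d) → ℝ) (hg : Measurable g) :
    eLpNorm (fun y => ∫ w in Metric.closedBall (0 : EuclideanSpace ℝ (Fin d)) 1,
        g (y - (ρ y / M₁) • w) * φ w) (ENNReal.ofReal p) (volume.restrict A)
      ≤ ENNReal.ofReal (2 ^ (1 / p)) * eLpNorm φ 1 volume *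
        eLpNorm g (ENNReal.ofReal p) (volume.restrict A') := by
  have hdiff : Differentiable ℝ fun y => ρ y / M₁ := by fun_prop
  have hderiv_le (y : EuclideanSpace ℝ (Fin d)) : ‖fderiv ℝ (fun y => ρ y / M₁) y‖₊ ≤ 2⁻¹ := by
    rw [← NNReal.coe_le_coe, coe_nnnorm, norm_fderiv_div_const (hρ y), abs_of_pos hM₁,
      div_le_iff₀ hM₁, NNReal.coe_inv, NNReal.coe_ofNat]
    linarith [hρ' y]
  have hp' : (ENNReal.ofReal p).toReal = p := toReal_ofReal (by linarith)
  have hshear : ∀ w ∈ Metric.closedBall (0 : EuclideanSpace ℝ (Fin d)) 1,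
      eLpNorm (fun y => g (y - (ρ y / M₁) • w)) (.ofReal p) (volume.restrict A) ≤
        .ofReal (2 ^ (1 / p)) * eLpNorm g (.ofReal p) (volume.restrict A') := by
    intro w hw
    have hcov := ofReal_mul_setLIntegral_comp_sub_smul_le (μ := volume) hdiff hderiv_le (by norm_num)
      (mem_closedBall_zero_iff.mp hw) hA (fun y hy => hAA' y hy w hw) (‖g ·‖ₑ ^ p)
    rw [show ENNReal.ofReal (1 - (2⁻¹ : ℝ≥0)) = 2⁻¹ by norm_num [ENNReal.ofReal_div_of_pos],
      ENNReal.inv_mul_le_iff two_ne_zero ofNat_ne_top] at hcov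
    have hLp := eLpNorm_le_rpow_mul_eLpNorm_of_lintegral_le (p := .ofReal p) (by positivity)
      ofReal_ne_top (by rwa [hp'])
    rw [hp'] at hLp
    rwa [← ofReal_rpow_of_pos two_pos, ofReal_ofNat]
  have hmeas : Measurable (uncurry fun y w => g (y - (ρ y / M₁) • w)) := by
    have := hρ.continuous
    exact hg.comp (by fun_prop)
  calc _ ≤ .ofReal (2 ^ (1 / p)) * eLpNorm g (.ofReal p) (volume.restrict A') *
        eLpNorm φ 1 (volume.restrict (Metric.closedBall 0 1)) :=
      eLpNorm_integral_mul_le_of_ae_eLpNorm_le (one_le_ofReal.mpr hp) ofReal_ne_top hmeas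
        hφint.aemeasurable.restrict (ae_restrict_of_forall_mem measurableSet_closedBall hshear)
    _ = _ := by rw [eLpNorm_restrict_eq_of_support_subset hφsupp, mul_right_comm]

/-- L_p bound of Lemma 4.3 (mollification using the regularized distance):
if `‖Dρ‖ ≤ M₁/2` everywhere, `y - (ρ(y)/M₁) w ∈ A'` for all `y ∈ A` and `w ∈ B₁`,
`φ ≥ 0` is integrable with support in the closed unit ball, and `g ∈ L_p(A')`, then
`g̃(y) = ∫_{B₁} g(y - (ρ(y)/M₁) w) φ(w) dw` satisfies
`‖g̃‖_{L_p(A)} ≤ 2^{1/p} ‖φ‖_{L_1} ‖g‖_{L_p(A')}`. -/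
theorem mollification_Lp_bound (d : ℕ) (hd : 1 ≤ d) (p : ℝ) (hp : 1 ≤ p)
    (M₁ : ℝ) (hM₁ : 0 < M₁)
    (ρ : EuclideanSpace ℝ (Fin d) → ℝ) (hρ : Differentiable ℝ ρ)
    (hρ' : ∀ y, ‖fderiv ℝ ρ y‖ ≤ M₁ / 2)
    (A A' : Set (EuclideanSpace ℝ (Fin d)))
    (hA : MeasurableSet A) (hA' : MeasurableSet A')
    (hAA' : ∀ y ∈ A, ∀ w ∈ Metric.closedBall (0 : EuclideanSpace ℝ (Fin d)) 1,
      y - (ρ y / M₁) • w ∈ A')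
    (φ : EuclideanSpace ℝ (Fin d) → ℝ) (hφint : Integrable φ)
    (hφ0 : ∀ w, 0 ≤ φ w)
    (hφsupp : Function.support φ ⊆ Metric.closedBall (0 : EuclideanSpace ℝ (Fin d)) 1)
    (g : EuclideanSpace ℝ (Fin d) → ℝ) (hg : Measurable g)
    (hgLp : eLpNorm g (ENNReal.ofReal p) (volume.restrict A') < ⊤) :
    eLpNorm (fun y => ∫ w in Metric.closedBall (0 : EuclideanSpace ℝ (Fin d)) 1,
        g (y - (ρ y / M₁) • w) * φ w) (ENNReal.ofReal p) (volume.restrict A)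
      ≤ ENNReal.ofReal (2 ^ (1 / p)) * eLpNorm φ 1 volume *
        eLpNorm g (ENNReal.ofReal p) (volume.restrict A') :=
  mollification_Lp_bound_general d p hp M₁ hM₁ ρ hρ hρ' A A' hA hAA' φ hφint hφsupp g hg
end

section
/- Let d ≥ 1, 1 ≤ p < ∞, and M₁ > 0. Let ρ : ℝ^d → ℝ be differentiable with ‖Dρ(y)‖ ≤ M₁/2 for all y ∈ ℝ^d. Let A, A' ⊆ ℝ^d be measurable sets such that y − (ρ(y)/M₁) w ∈ A' for every y ∈ A and every w in the closed unit ball B₁ ⊆ ℝ^d. Let φ : ℝ^d → [0,∞) be integrable with support contained in B₁. Suppose g : ℝ^d → ℝ is continuously differentiable with bounded derivative and ‖Dg‖_{L_p(A')} < ∞. Then the mollification g̃(y) := ∫_{B₁} g(y − (ρ(y)/M₁) w) φ(w) dw is differentiable on ℝ^d and ‖Dg̃‖_{L_p(A)} ≤ (3/2) · 2^{1/p} ‖φ‖_{L_1(ℝ^d)} ‖Dg‖_{L_p(A')}. -/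
/-!
Write `T_w y = y - (ρ y / M₁) • w`. Differentiating under the integral sign,
`Dg̃(y) = ∫ φ(w) Dg(T_w y) ∘ (I - M₁⁻¹ Dρ(y) ⊗ w) dw`. As `‖M₁⁻¹ Dρ‖ ≤ 1/2` and `‖w‖ ≤ 1`, the
linear factor has norm at most `3/2` and determinant `1 - M₁⁻¹ Dρ(y) w ≥ 1/2`, and `T_w` is
injective, being the identity perturbed by a `1/2`-Lipschitz map. Jensen's inequality for the
weight `|φ|` and Tonelli bound `‖Dg̃‖_{L_p(A)}^p` by
`(3/2)^p ‖φ‖₁^(p-1) ∫ |φ(w)| ∫_A |Dg(T_w y)|^p dy dw`, and the change of variables `z = T_w y`,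
which maps `A` into `A'` with Jacobian at least `1/2`, bounds the inner integral by
`2 ‖Dg‖_{L_p(A')}^p`.
-/

open MeasureTheory
open scoped ENNReal NNReal

section Lintegral

variable {α β : Type*} [MeasurableSpace α] [MeasurableSpace β]

-- Hölder with exponents `1 - 1/p` and `1/p` applied to `φ G = φ ^ (1 - 1/p) * (φ G ^ p) ^ (1/p)`.
theorem ENNReal.lintegral_mul_rpow_le {μ : Measure α} {φ G : α → ℝ≥0∞} (hφ : AEMeasurable φ μ)
    (hG : AEMeasurable G μ) {p : ℝ} (hp : 1 ≤ p) :
    (∫⁻ a, φ a * G a ∂μ) ^ p ≤ (∫⁻ a, φ a ∂μ) ^ (p - 1) * ∫⁻ a, φ a * G a ^ p ∂μ := by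
  have hp0 : 0 < p := zero_lt_one.trans_le hp
  have hholder : ∫⁻ a, φ a * G a ∂μ ≤
      (∫⁻ a, φ a ∂μ) ^ (1 - p⁻¹) * (∫⁻ a, φ a * G a ^ p ∂μ) ^ p⁻¹ := by
    calc ∫⁻ a, φ a * G a ∂μ = ∫⁻ a, φ a ^ (1 - p⁻¹) * (φ a * G a ^ p) ^ p⁻¹ ∂μ := by
          refine lintegral_congr fun a => ?_
          rw [ENNReal.mul_rpow_of_nonneg _ _ (by positivity), ← ENNReal.rpow_mul,
            mul_inv_cancel₀ hp0.ne', ENNReal.rpow_one, ← mul_assoc,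
            ← ENNReal.rpow_add_of_nonneg _ _ (sub_nonneg.2 (inv_le_one_of_one_le₀ hp))
              (by positivity), sub_add_cancel, ENNReal.rpow_one]
      _ ≤ _ := ENNReal.lintegral_mul_norm_pow_le hφ (hφ.mul (hG.pow_const p))
          (sub_nonneg.2 (inv_le_one_of_one_le₀ hp)) (by positivity) (sub_add_cancel _ _)
  calc (∫⁻ a, φ a * G a ∂μ) ^ p
      ≤ ((∫⁻ a, φ a ∂μ) ^ (1 - p⁻¹) * (∫⁻ a, φ a * G a ^ p ∂μ) ^ p⁻¹) ^ p :=
        ENNReal.rpow_le_rpow hholder hp0.le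
    _ = _ := by
        rw [ENNReal.mul_rpow_of_nonneg _ _ hp0.le, ← ENNReal.rpow_mul, ← ENNReal.rpow_mul,
          inv_mul_cancel₀ hp0.ne', ENNReal.rpow_one, sub_mul, one_mul, inv_mul_cancel₀ hp0.ne']

theorem lintegral_rpow_lintegral_mul_le {μ : Measure α} {ν : Measure β} [SFinite μ] [SFinite ν]
    {φ : β → ℝ≥0∞} {G : α → β → ℝ≥0∞} (hφ : AEMeasurable φ ν)
    (hG : Measurable (Function.uncurry G)) {p : ℝ} (hp : 1 ≤ p) {N : ℝ≥0∞}
    (hN : ∀ᵐ w ∂ν, ∫⁻ x, G x w ^ p ∂μ ≤ N) :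
    ∫⁻ x, (∫⁻ w, φ w * G x w ∂ν) ^ p ∂μ ≤ (∫⁻ w, φ w ∂ν) ^ p * N := by
  set Φ := ∫⁻ w, φ w ∂ν
  have hφG : AEMeasurable (Function.uncurry fun x w => φ w * G x w ^ p) (μ.prod ν) :=
    hφ.comp_snd.mul (hG.pow_const p).aemeasurable
  calc ∫⁻ x, (∫⁻ w, φ w * G x w ∂ν) ^ p ∂μ
      ≤ ∫⁻ x, Φ ^ (p - 1) * ∫⁻ w, φ w * G x w ^ p ∂ν ∂μ :=
        lintegral_mono fun x => ENNReal.lintegral_mul_rpow_le hφ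
          (hG.comp measurable_prodMk_left).aemeasurable hp
    _ = Φ ^ (p - 1) * ∫⁻ w, φ w * ∫⁻ x, G x w ^ p ∂μ ∂ν := by
        rw [lintegral_const_mul'' _ hφG.lintegral_prod_right, lintegral_lintegral_swap hφG]
        congr 1
        refine lintegral_congr fun w => lintegral_const_mul _ ?_
        exact ((hG.comp measurable_prodMk_right).pow_const p)
    _ ≤ Φ ^ (p - 1) * ∫⁻ w, φ w * N ∂ν := by
        gcongr Φ ^ (p - 1) * ?_
        exact lintegral_mono_ae (hN.mono fun w hw => mul_le_mul_right hw _)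
    _ = Φ ^ (p - 1) * Φ ^ (1 : ℝ) * N := by
        rw [lintegral_mul_const'' _ hφ, ENNReal.rpow_one, mul_assoc]
    _ = Φ ^ p * N := by
        rw [← ENNReal.rpow_add_of_nonneg _ _ (sub_nonneg.2 hp) zero_le_one, sub_add_cancel]

theorem eLpNorm_le_mul_of_lintegral_rpow_le {F G : Type*} [NormedAddCommGroup F]
    [NormedAddCommGroup G] {μ : Measure α} {ν : Measure β} {f : α → F} {g : β → G} {p : ℝ}
    (hp : 0 < p) {c : ℝ≥0∞}
    (h : ∫⁻ x, ‖f x‖ₑ ^ p ∂μ ≤ c ^ p * ∫⁻ y, ‖g y‖ₑ ^ p ∂ν) :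
    eLpNorm f (ENNReal.ofReal p) μ ≤ c * eLpNorm g (ENNReal.ofReal p) ν := by
  have hp' : ENNReal.ofReal p ≠ 0 := ENNReal.ofReal_pos.2 hp |>.ne'
  rw [eLpNorm_eq_lintegral_rpow_enorm_toReal hp' ENNReal.ofReal_ne_top,
    eLpNorm_eq_lintegral_rpow_enorm_toReal hp' ENNReal.ofReal_ne_top, ENNReal.toReal_ofReal hp.le]
  calc (∫⁻ x, ‖f x‖ₑ ^ p ∂μ) ^ (1 / p) ≤ (c ^ p * ∫⁻ y, ‖g y‖ₑ ^ p ∂ν) ^ (1 / p) :=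
        ENNReal.rpow_le_rpow h (by positivity)
    _ = c * (∫⁻ y, ‖g y‖ₑ ^ p ∂ν) ^ (1 / p) := by
        rw [ENNReal.mul_rpow_of_nonneg _ _ (by positivity), ← ENNReal.rpow_mul,
          mul_one_div_cancel hp.ne', ENNReal.rpow_one]

end Lintegral

section PerturbedIdentity

variable {E : Type*} [NormedAddCommGroup E] [NormedSpace ℝ E]

theorem ContinuousLinearMap.det_id_sub_smulRight_s5 [FiniteDimensional ℝ E] (c : E →L[ℝ] ℝ)
    (w : E) : (ContinuousLinearMap.id ℝ E - c.smulRight w).det = 1 - c w := by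
  let b := Module.finBasis ℝ E
  have hmat : LinearMap.toMatrix b b ((ContinuousLinearMap.id ℝ E - c.smulRight w :
      E →L[ℝ] E) : E →ₗ[ℝ] E) = 1 - Matrix.replicateCol (Fin 1) (b.repr w) *
        Matrix.replicateRow (Fin 1) (fun j => c (b j)) := by
    ext i j
    simp [LinearMap.toMatrix_apply, Matrix.one_apply, Finsupp.single_apply, eq_comm,
      Matrix.mul_apply, mul_comm]
  rw [ContinuousLinearMap.det, ← LinearMap.det_toMatrix b, hmat, Matrix.det_one_sub_mul_comm,
    Matrix.det_unique]
  simp only [Matrix.sub_apply, Matrix.one_apply_eq, Matrix.mul_apply,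
    Matrix.replicateRow_apply, Matrix.replicateCol_apply]
  rw [sub_right_inj]
  conv_rhs => rw [← b.sum_repr w]
  simp only [map_sum, map_smul, smul_eq_mul, mul_comm]

theorem ContinuousLinearMap.nnnorm_id_sub_smulRight_le {c : E →L[ℝ] ℝ} {K : ℝ≥0} (hc : ‖c‖₊ ≤ K)
    {w : E} (hw : ‖w‖ ≤ 1) : ‖ContinuousLinearMap.id ℝ E - c.smulRight w‖₊ ≤ 1 + K := by
  rw [← NNReal.coe_le_coe, coe_nnnorm, NNReal.coe_add, NNReal.coe_one]
  calc ‖ContinuousLinearMap.id ℝ E - c.smulRight w‖ ≤ 1 + ‖c‖ * ‖w‖ :=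
        (norm_sub_le _ _).trans (add_le_add norm_id_le (norm_smulRight_apply c w).le)
    _ ≤ 1 + K * 1 := by gcongr; exact hc
    _ = 1 + K := by rw [mul_one]

theorem hasFDerivAt_sub_smul {s : E → ℝ} {s' : E →L[ℝ] ℝ} {x : E} (hs : HasFDerivAt s s' x)
    (w : E) :
    HasFDerivAt (fun x => x - s x • w) (ContinuousLinearMap.id ℝ E - s'.smulRight w) x :=
  (hasFDerivAt_id x).sub (hs.smul_const w)

theorem injective_sub_smul {s : E → ℝ} {K : ℝ≥0} (hs : LipschitzWith K s) {w : E}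
    (hw : K * ‖w‖ < 1) : Function.Injective fun x => x - s x • w := by
  intro x y hxy
  have hdiff : x - y = (s x - s y) • w := by
    rw [sub_smul]; exact sub_eq_sub_iff_sub_eq_sub.mpr hxy
  have hle : ‖x - y‖ ≤ K * ‖w‖ * ‖x - y‖ := by
    calc ‖x - y‖ = ‖s x - s y‖ * ‖w‖ := by rw [hdiff, norm_smul]
      _ ≤ K * ‖x - y‖ * ‖w‖ := by
        gcongr; simpa [dist_eq_norm] using hs.dist_le_mul x y
      _ = K * ‖w‖ * ‖x - y‖ := by ring
  have hnorm : ‖x - y‖ = 0 := by nlinarith [norm_nonneg (x - y)]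
  exact sub_eq_zero.mp (norm_eq_zero.mp hnorm)

end PerturbedIdentity

section Mollification

variable {E : Type*} [NormedAddCommGroup E] [NormedSpace ℝ E] [FiniteDimensional ℝ E]
  [MeasurableSpace E] [BorelSpace E]

theorem lintegral_comp_le_of_one_le_mul_abs_det (ν : Measure E) [ν.IsAddHaarMeasure]
    {A A' : Set E} (hA : MeasurableSet A) {T : E → E} {T' : E → E →L[ℝ] E}
    (hT' : ∀ x ∈ A, HasFDerivWithinAt T (T' x) A x) (hT : Set.InjOn T A)
    (hAA' : Set.MapsTo T A A') {c : ℝ} (hc : ∀ x ∈ A, 1 ≤ c * |(T' x).det|) (F : E → ℝ≥0∞) :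
    ∫⁻ x in A, F (T x) ∂ν ≤ ENNReal.ofReal c * ∫⁻ y in A', F y ∂ν := by
  calc ∫⁻ x in A, F (T x) ∂ν
      ≤ ∫⁻ x in A, ENNReal.ofReal c * (ENNReal.ofReal |(T' x).det| * F (T x)) ∂ν := by
        refine setLIntegral_mono' hA fun x hx => ?_
        rw [← mul_assoc, ← ENNReal.ofReal_mul' (abs_nonneg _)]
        exact le_mul_of_one_le_left' (ENNReal.ofReal_one ▸ ENNReal.ofReal_le_ofReal (hc x hx))
    _ = ENNReal.ofReal c * ∫⁻ y in T '' A, F y ∂ν := by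
        rw [lintegral_const_mul' _ _ ENNReal.ofReal_ne_top,
          lintegral_image_eq_lintegral_abs_det_fderiv_mul ν hA hT' hT]
    _ ≤ ENNReal.ofReal c * ∫⁻ y in A', F y ∂ν := by
        gcongr
        exact hAA'.image_subset

variable {s : E → ℝ} {s' : E → E →L[ℝ] ℝ} {K : ℝ≥0} {g : E → ℝ} {C : ℝ} {μ : Measure E}
  {φ : E → ℝ}

theorem hasFDerivAt_integral_comp_sub_smul (hs : ∀ x, HasFDerivAt s (s' x) x)
    (hK : ∀ x, ‖s' x‖₊ ≤ K) (hg : ContDiff ℝ 1 g) (hC : ∀ x, ‖fderiv ℝ g x‖ ≤ C)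
    (hμ : ∀ᵐ w ∂μ, ‖w‖ ≤ 1) (hφ : Integrable φ μ) (x : E) :
    HasFDerivAt (fun x => ∫ w, g (x - s x • w) * φ w ∂μ)
      (∫ w, φ w • (fderiv ℝ g (x - s x • w)).comp
        (ContinuousLinearMap.id ℝ E - (s' x).smulRight w) ∂μ) x := by
  have hg_diff : Differentiable ℝ g := hg.differentiable one_ne_zero
  have hT_cont : ∀ x : E, Continuous fun w : E => x - s x • w := fun x => by fun_prop
  obtain ⟨M, hM⟩ : ∃ M, ∀ w ∈ Metric.closedBall (0 : E) 1, ‖g (x - s x • w)‖ ≤ M :=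
    (isCompact_closedBall 0 1).exists_bound_of_continuousOn
      (hg_diff.continuous.comp (hT_cont x)).continuousOn
  refine hasFDerivAt_integral_of_dominated_of_fderiv_le (𝕜 := ℝ)
    (F := fun x w => g (x - s x • w) * φ w)
    (F' := fun x w => φ w • (fderiv ℝ g (x - s x • w)).comp
      (ContinuousLinearMap.id ℝ E - (s' x).smulRight w))
    (bound := fun w => ‖φ w‖ * (C * (1 + K))) Filter.univ_mem ?_ ?_ ?_ ?_
    (hφ.norm.mul_const _) ?_
  · exact .of_forall fun x => (hg_diff.continuous.comp (hT_cont x)).aestronglyMeasurable.mul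
      hφ.aestronglyMeasurable
  · exact hφ.bdd_mul (hg_diff.continuous.comp (hT_cont x)).aestronglyMeasurable
      (hμ.mono fun w hw => hM w (by simpa using hw))
  · refine hφ.aestronglyMeasurable.smul (Continuous.aestronglyMeasurable ?_)
    exact ((hg.continuous_fderiv one_ne_zero).comp (hT_cont x)).clm_comp (by fun_prop)
  · refine hμ.mono fun w hw x' _ => ?_
    calc ‖φ w • (fderiv ℝ g (x' - s x' • w)).comp
          (ContinuousLinearMap.id ℝ E - (s' x').smulRight w)‖
        ≤ ‖φ w‖ * (‖fderiv ℝ g (x' - s x' • w)‖ *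
          ‖ContinuousLinearMap.id ℝ E - (s' x').smulRight w‖) := by
          rw [norm_smul]; gcongr; exact ContinuousLinearMap.opNorm_comp_le _ _
      _ ≤ ‖φ w‖ * (C * (1 + K)) := by
          gcongr
          · exact (norm_nonneg _).trans (hC 0)
          · exact hC _
          · exact_mod_cast ContinuousLinearMap.nnnorm_id_sub_smulRight_le (hK x') hw
  · exact .of_forall fun w x' _ =>
      ((hg_diff _).hasFDerivAt.comp x' (hasFDerivAt_sub_smul (hs x') w)).mul_const (φ w)

theorem enorm_fderiv_integral_comp_sub_smul_le (hs : ∀ x, HasFDerivAt s (s' x) x)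
    (hK : ∀ x, ‖s' x‖₊ ≤ K) (hg : ContDiff ℝ 1 g) (hC : ∀ x, ‖fderiv ℝ g x‖ ≤ C)
    (hμ : ∀ᵐ w ∂μ, ‖w‖ ≤ 1) (hφ : Integrable φ μ) (x : E) :
    ‖fderiv ℝ (fun x => ∫ w, g (x - s x • w) * φ w ∂μ) x‖ₑ ≤
      (1 + K) * ∫⁻ w, ‖φ w‖ₑ * ‖fderiv ℝ g (x - s x • w)‖ₑ ∂μ := by
  rw [(hasFDerivAt_integral_comp_sub_smul hs hK hg hC hμ hφ x).fderiv,
    ← lintegral_const_mul' _ _ (by finiteness)]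
  refine (enorm_integral_le_lintegral_enorm _).trans (lintegral_mono_ae (hμ.mono fun w hw => ?_))
  rw [enorm_smul, mul_left_comm]
  gcongr
  refine (ContinuousLinearMap.opENorm_comp_le _ _).trans ?_
  rw [mul_comm]
  gcongr
  exact_mod_cast ContinuousLinearMap.nnnorm_id_sub_smulRight_le (hK x) hw

theorem lintegral_comp_sub_smul_le (ν : Measure E) [ν.IsAddHaarMeasure]
    (hs : ∀ x, HasFDerivAt s (s' x) x) (hK : ∀ x, ‖s' x‖₊ ≤ K) (hK1 : K < 1) {A A' : Set E}
    (hA : MeasurableSet A) {w : E} (hw : ‖w‖ ≤ 1) (hAA' : Set.MapsTo (fun x => x - s x • w) A A')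
    (F : E → ℝ≥0∞) :
    ∫⁻ x in A, F (x - s x • w) ∂ν ≤ ENNReal.ofReal (1 - K)⁻¹ * ∫⁻ y in A', F y ∂ν := by
  have hlip : LipschitzWith K s := lipschitzWith_of_nnnorm_fderiv_le
    (fun x => (hs x).differentiableAt) fun x => (hs x).fderiv ▸ hK x
  have hKw : K * ‖w‖ < 1 := (mul_le_of_le_one_right K.2 hw).trans_lt hK1
  refine lintegral_comp_le_of_one_le_mul_abs_det ν hA
    (fun x _ => (hasFDerivAt_sub_smul (hs x) w).hasFDerivWithinAt)
    (injective_sub_smul hlip hKw).injOn hAA' (fun x _ => ?_) F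
  have hsw : |s' x w| ≤ K := by
    calc |s' x w| ≤ ‖s' x‖ * ‖w‖ := (s' x).le_opNorm w
      _ ≤ K * 1 := by gcongr; exact hK x
      _ = K := mul_one _
  rw [ContinuousLinearMap.det_id_sub_smulRight_s5, le_inv_mul_iff₀ (by simpa using hK1), mul_one]
  calc (1 : ℝ) - K ≤ |1| - |s' x w| := by rw [abs_one]; linarith
    _ ≤ |1 - s' x w| := abs_sub_abs_le_abs_sub _ _

theorem eLpNorm_fderiv_integral_comp_sub_smul_le (ν : Measure E) [ν.IsAddHaarMeasure] [SFinite μ]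
    (hs : ∀ x, HasFDerivAt s (s' x) x) (hK : ∀ x, ‖s' x‖₊ ≤ K) (hK1 : K < 1)
    (hg : ContDiff ℝ 1 g) (hC : ∀ x, ‖fderiv ℝ g x‖ ≤ C) (hμ : ∀ᵐ w ∂μ, ‖w‖ ≤ 1)
    (hφ : Integrable φ μ) {A A' : Set E} (hA : MeasurableSet A)
    (hAA' : ∀ᵐ w ∂μ, Set.MapsTo (fun x => x - s x • w) A A') {p : ℝ} (hp : 1 ≤ p) :
    eLpNorm (fun x => ‖fderiv ℝ (fun x => ∫ w, g (x - s x • w) * φ w ∂μ) x‖) (ENNReal.ofReal p)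
        (ν.restrict A) ≤
      (1 + K) * ENNReal.ofReal (1 - K)⁻¹ ^ (1 / p) * (∫⁻ w, ‖φ w‖ₑ ∂μ) *
        eLpNorm (fun y => ‖fderiv ℝ g y‖) (ENNReal.ofReal p) (ν.restrict A') := by
  have hp0 : 0 < p := zero_lt_one.trans_le hp
  set F := fun x => ∫ w, g (x - s x • w) * φ w ∂μ
  set Φ := ∫⁻ w, ‖φ w‖ₑ ∂μ
  set N := ∫⁻ y in A', ‖fderiv ℝ g y‖ₑ ^ p ∂ν
  have hs_cont : Continuous s := continuous_iff_continuousAt.2 fun x => (hs x).continuousAt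
  have hG : Measurable (Function.uncurry fun x w => ‖fderiv ℝ g (x - s x • w)‖ₑ) :=
    ((hg.continuous_fderiv one_ne_zero).comp
      (by fun_prop : Continuous fun z : E × E => z.1 - s z.1 • z.2)).enorm.measurable
  have hN : ∀ᵐ w ∂μ, ∫⁻ x in A, ‖fderiv ℝ g (x - s x • w)‖ₑ ^ p ∂ν ≤
      ENNReal.ofReal (1 - K)⁻¹ * N :=
    (hAA'.and hμ).mono fun w ⟨hw, hw'⟩ => lintegral_comp_sub_smul_le ν hs hK hK1 hA hw' hw _
  refine eLpNorm_le_mul_of_lintegral_rpow_le hp0 ?_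
  simp only [enorm_norm]
  calc ∫⁻ x in A, ‖fderiv ℝ F x‖ₑ ^ p ∂ν
      ≤ ∫⁻ x in A, ((1 + K) * ∫⁻ w, ‖φ w‖ₑ * ‖fderiv ℝ g (x - s x • w)‖ₑ ∂μ) ^ p ∂ν :=
        lintegral_mono fun x => ENNReal.rpow_le_rpow
          (enorm_fderiv_integral_comp_sub_smul_le hs hK hg hC hμ hφ x) hp0.le
    _ = (1 + K) ^ p * ∫⁻ x in A, (∫⁻ w, ‖φ w‖ₑ * ‖fderiv ℝ g (x - s x • w)‖ₑ ∂μ) ^ p ∂ν := by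
        simp_rw [ENNReal.mul_rpow_of_nonneg _ _ hp0.le]
        exact lintegral_const_mul' _ _ (by finiteness)
    _ ≤ (1 + K) ^ p * (Φ ^ p * (ENNReal.ofReal (1 - K)⁻¹ * N)) := by
        gcongr
        exact lintegral_rpow_lintegral_mul_le hφ.aestronglyMeasurable.enorm hG hp hN
    _ = ((1 + K) * ENNReal.ofReal (1 - K)⁻¹ ^ (1 / p) * Φ) ^ p * N := by
        rw [ENNReal.mul_rpow_of_nonneg _ _ hp0.le, ENNReal.mul_rpow_of_nonneg _ _ hp0.le,
          ← ENNReal.rpow_mul, one_div_mul_cancel hp0.ne', ENNReal.rpow_one]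
        ring

end Mollification

theorem mollification_gradient_bound_general (d : ℕ) (p : ℝ) (hp : 1 ≤ p)
    (M₁ : ℝ) (hM₁ : 0 < M₁)
    (ρ : EuclideanSpace ℝ (Fin d) → ℝ) (hρ : Differentiable ℝ ρ)
    (hρ' : ∀ y, ‖fderiv ℝ ρ y‖ ≤ M₁ / 2)
    (A A' : Set (EuclideanSpace ℝ (Fin d)))
    (hA : MeasurableSet A)
    (hAA' : ∀ y ∈ A, ∀ w ∈ Metric.closedBall (0 : EuclideanSpace ℝ (Fin d)) 1,
      y - (ρ y / M₁) • w ∈ A')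
    (φ : EuclideanSpace ℝ (Fin d) → ℝ) (hφint : Integrable φ)
    (hφsupp : Function.support φ ⊆ Metric.closedBall (0 : EuclideanSpace ℝ (Fin d)) 1)
    (g : EuclideanSpace ℝ (Fin d) → ℝ) (hg : ContDiff ℝ 1 g)
    (hgbd : ∃ C : ℝ, ∀ y, ‖fderiv ℝ g y‖ ≤ C)
    (gtilde : EuclideanSpace ℝ (Fin d) → ℝ)
    (hgtilde : gtilde = fun y => ∫ w in Metric.closedBall (0 : EuclideanSpace ℝ (Fin d)) 1,
      g (y - (ρ y / M₁) • w) * φ w) :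
    Differentiable ℝ gtilde ∧
    eLpNorm (fun y => ‖fderiv ℝ gtilde y‖) (ENNReal.ofReal p) (volume.restrict A)
      ≤ ENNReal.ofReal ((3 / 2) * 2 ^ (1 / p)) * eLpNorm φ 1 volume *
        eLpNorm (fun y => ‖fderiv ℝ g y‖) (ENNReal.ofReal p) (volume.restrict A') := by
  obtain ⟨C, hC⟩ := hgbd
  subst hgtilde
  have hs : ∀ y, HasFDerivAt (fun y => ρ y / M₁) (M₁⁻¹ • fderiv ℝ ρ y) y := fun y => by
    simpa only [div_eq_inv_mul] using (hρ y).hasFDerivAt.const_mul M₁⁻¹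
  have hK : ∀ y, ‖M₁⁻¹ • fderiv ℝ ρ y‖₊ ≤ (1 / 2 : ℝ≥0) := fun y => by
    rw [← NNReal.coe_le_coe, coe_nnnorm, norm_smul, norm_inv, Real.norm_of_nonneg hM₁.le]
    calc M₁⁻¹ * ‖fderiv ℝ ρ y‖ ≤ M₁⁻¹ * (M₁ / 2) := by gcongr; exact hρ' y
      _ = _ := by field_simp; norm_num
  have hB : ∀ᵐ w ∂volume.restrict (Metric.closedBall (0 : EuclideanSpace ℝ (Fin d)) 1),
      w ∈ Metric.closedBall 0 1 := ae_restrict_mem measurableSet_closedBall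
  have hB_norm : ∀ᵐ w ∂volume.restrict (Metric.closedBall (0 : EuclideanSpace ℝ (Fin d)) 1),
      ‖w‖ ≤ 1 := hB.mono fun w hw => by simpa using hw
  have hΦ : ∫⁻ w in Metric.closedBall 0 1, ‖φ w‖ₑ = eLpNorm φ 1 volume := by
    rw [eLpNorm_one_eq_lintegral_enorm, setLIntegral_eq_of_support_subset]
    simpa [Function.support] using hφsupp
  have hconst : (1 + (1 / 2 : ℝ≥0) : ℝ≥0∞) * ENNReal.ofReal (1 - (1 / 2 : ℝ≥0) : ℝ)⁻¹ ^ (1 / p)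
      = ENNReal.ofReal (3 / 2 * 2 ^ (1 / p)) := by
    rw [ENNReal.ofReal_mul (by norm_num), ← ENNReal.ofReal_rpow_of_nonneg (by norm_num)
      (by positivity), ← ENNReal.ofReal_one, ← ENNReal.ofReal_coe_nnreal,
      ← ENNReal.ofReal_add zero_le_one (by positivity)]
    norm_num
  refine ⟨fun y => (hasFDerivAt_integral_comp_sub_smul hs hK hg hC hB_norm hφint.restrict
    y).differentiableAt, ?_⟩
  rw [← hconst, ← hΦ]
  exact eLpNorm_fderiv_integral_comp_sub_smul_le volume hs hK (by norm_num) hg hC hB_norm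
    hφint.restrict hA (hB.mono fun w hw y hy => hAA' y hy w hw) hp

/-- Gradient bound of Lemma 4.3 (mollification using the regularized distance):
under the same setup as the `L_p` bound, if `g` is `C¹` with bounded derivative and
`‖Dg‖_{L_p(A')} < ∞`, then `g̃(y) = ∫_{B₁} g(y - (ρ(y)/M₁) w) φ(w) dw` is
differentiable and `‖Dg̃‖_{L_p(A)} ≤ (3/2) · 2^{1/p} ‖φ‖_{L_1} ‖Dg‖_{L_p(A')}`. -/
theorem mollification_gradient_bound (d : ℕ) (hd : 1 ≤ d) (p : ℝ) (hp : 1 ≤ p)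
    (M₁ : ℝ) (hM₁ : 0 < M₁)
    (ρ : EuclideanSpace ℝ (Fin d) → ℝ) (hρ : Differentiable ℝ ρ)
    (hρ' : ∀ y, ‖fderiv ℝ ρ y‖ ≤ M₁ / 2)
    (A A' : Set (EuclideanSpace ℝ (Fin d)))
    (hA : MeasurableSet A) (hA' : MeasurableSet A')
    (hAA' : ∀ y ∈ A, ∀ w ∈ Metric.closedBall (0 : EuclideanSpace ℝ (Fin d)) 1,
      y - (ρ y / M₁) • w ∈ A')
    (φ : EuclideanSpace ℝ (Fin d) → ℝ) (hφint : Integrable φ)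
    (hφ0 : ∀ w, 0 ≤ φ w)
    (hφsupp : Function.support φ ⊆ Metric.closedBall (0 : EuclideanSpace ℝ (Fin d)) 1)
    (g : EuclideanSpace ℝ (Fin d) → ℝ) (hg : ContDiff ℝ 1 g)
    (hgbd : ∃ C : ℝ, ∀ y, ‖fderiv ℝ g y‖ ≤ C)
    (hDgLp : eLpNorm (fun y => ‖fderiv ℝ g y‖) (ENNReal.ofReal p)
      (volume.restrict A') < ⊤)
    (gtilde : EuclideanSpace ℝ (Fin d) → ℝ)
    (hgtilde : gtilde = fun y => ∫ w in Metric.closedBall (0 : EuclideanSpace ℝ (Fin d)) 1,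
      g (y - (ρ y / M₁) • w) * φ w) :
    Differentiable ℝ gtilde ∧
    eLpNorm (fun y => ‖fderiv ℝ gtilde y‖) (ENNReal.ofReal p) (volume.restrict A)
      ≤ ENNReal.ofReal ((3 / 2) * 2 ^ (1 / p)) * eLpNorm φ 1 volume *
        eLpNorm (fun y => ‖fderiv ℝ g y‖) (ENNReal.ofReal p) (volume.restrict A') :=
  mollification_gradient_bound_general d p hp M₁ hM₁ ρ hρ hρ' A A' hA hAA' φ hφint hφsupp g hg hgbd
    gtilde hgtilde
end

section
/- Let d ≥ 1, M ≥ 0, let G : ℝ^d × ℝ → ℝ and ρ : ℝ^d → ℝ be differentiable, and assume: ρ(y) = G(y, ρ(y)) for all y ∈ ℝ^d; |∂G/∂τ (y, τ)| ≤ 1/2 for all (y, τ) ∈ ℝ^d × ℝ; and |∂ρ/∂y^i (y)| ≤ M for all y and all i ∈ {1,…,d}. Then for all y, z ∈ ℝ^d and each i ∈ {1,…,d}, |∂_i ρ(y) − ∂_i ρ(z)| ≤ 2 |∂_{y^i} G(y, ρ(y)) − ∂_{y^i} G(z, ρ(z))| + 2M |∂_τ G(y, ρ(y)) − ∂_τ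 G(z, ρ(z))|. -/
/-!
Differentiating `ρ(y) = G(y, ρ(y))` in the direction `v` gives
`∂_v ρ = ∂_v G + ∂_v ρ · ∂_τ G`. Subtracting this identity at `y` and at `z` and splitting
`∂_v ρ(y) ∂_τ G(y) - ∂_v ρ(z) ∂_τ G(z)` as
`∂_v ρ(y) (∂_τ G(y) - ∂_τ G(z)) + (∂_v ρ(y) - ∂_v ρ(z)) ∂_τ G(z)`,
the last term is at most half of `|∂_v ρ(y) - ∂_v ρ(z)|`; absorbing it yields the factor `2`.
-/

theorem fderiv_apply_eq_of_eq_comp_prodMk {𝕜 E : Type*} [NontriviallyNormedField 𝕜]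
    [NormedAddCommGroup E] [NormedSpace 𝕜 E] {G : E × 𝕜 → 𝕜} {ρ : E → 𝕜} {y : E}
    (hG : DifferentiableAt 𝕜 G (y, ρ y)) (hρ : DifferentiableAt 𝕜 ρ y)
    (hfix : ∀ x, ρ x = G (x, ρ x)) (v : E) :
    fderiv 𝕜 ρ y v = fderiv 𝕜 G (y, ρ y) (v, 0) + fderiv 𝕜 ρ y v * fderiv 𝕜 G (y, ρ y) (0, 1) := by
  have hcomp : HasFDerivAt ρ
      ((fderiv 𝕜 G (y, ρ y)).comp ((ContinuousLinearMap.id 𝕜 E).prod (fderiv 𝕜 ρ y))) y :=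
    (hG.hasFDerivAt.comp y ((hasFDerivAt_id y).prodMk hρ.hasFDerivAt)).congr_of_eventuallyEq
      (Filter.Eventually.of_forall hfix)
  have hsplit : ((v, fderiv 𝕜 ρ y v) : E × 𝕜) = (v, 0) + fderiv 𝕜 ρ y v • ((0 : E), (1 : 𝕜)) := by
    simp
  conv_lhs => rw [hcomp.fderiv]
  rw [ContinuousLinearMap.comp_apply, ContinuousLinearMap.prod_apply,
    ContinuousLinearMap.id_apply, hsplit, map_add, map_smul, smul_eq_mul]

theorem abs_sub_le_of_eq_add_mul {a b A A' B B' M : ℝ} (ha : a = A + a * B)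
    (hb : b = A' + b * B') (hB' : |B'| ≤ 1 / 2) (haM : |a| ≤ M) :
    |a - b| ≤ 2 * |A - A'| + 2 * M * |B - B'| := by
  have hdiff : a - b = (A - A') + a * (B - B') + (a - b) * B' := by
    linear_combination ha - hb
  have hbound : |a - b| ≤ |A - A'| + |a| * |B - B'| + |a - b| * |B'| :=
    calc |a - b| = |(A - A') + a * (B - B') + (a - b) * B'| := by rw [← hdiff]
      _ ≤ |A - A'| + |a * (B - B')| + |(a - b) * B'| := abs_add_three _ _ _
      _ = |A - A'| + |a| * |B - B'| + |a - b| * |B'| := by rw [abs_mul, abs_mul]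
  have h₁ : |a| * |B - B'| ≤ M * |B - B'| := mul_le_mul_of_nonneg_right haM (abs_nonneg _)
  have h₂ : |a - b| * |B'| ≤ |a - b| * (1 / 2) := mul_le_mul_of_nonneg_left hB' (abs_nonneg _)
  linarith

theorem fixed_point_gradient_difference_general (d : ℕ) (M : ℝ)
    (G : EuclideanSpace ℝ (Fin d) × ℝ → ℝ) (ρ : EuclideanSpace ℝ (Fin d) → ℝ)
    (hGdiff : Differentiable ℝ G) (hρdiff : Differentiable ℝ ρ)
    (hfix : ∀ y, ρ y = G (y, ρ y))
    (hGτ : ∀ (y : EuclideanSpace ℝ (Fin d)) (τ : ℝ),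
      |fderiv ℝ G (y, τ) ((0 : EuclideanSpace ℝ (Fin d)), (1 : ℝ))| ≤ 1 / 2)
    (hρbd : ∀ (y : EuclideanSpace ℝ (Fin d)) (i : Fin d),
      |fderiv ℝ ρ y (EuclideanSpace.single i 1)| ≤ M) :
    ∀ (y z : EuclideanSpace ℝ (Fin d)) (i : Fin d),
      |fderiv ℝ ρ y (EuclideanSpace.single i 1) -
          fderiv ℝ ρ z (EuclideanSpace.single i 1)| ≤
        2 * |fderiv ℝ G (y, ρ y) ((EuclideanSpace.single i 1 : EuclideanSpace ℝ (Fin d)), (0 : ℝ)) -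
              fderiv ℝ G (z, ρ z) ((EuclideanSpace.single i 1 : EuclideanSpace ℝ (Fin d)), (0 : ℝ))| +
        2 * M * |fderiv ℝ G (y, ρ y) ((0 : EuclideanSpace ℝ (Fin d)), (1 : ℝ)) -
              fderiv ℝ G (z, ρ z) ((0 : EuclideanSpace ℝ (Fin d)), (1 : ℝ))| := by
  intro y z i
  exact abs_sub_le_of_eq_add_mul
    (fderiv_apply_eq_of_eq_comp_prodMk (hGdiff _) (hρdiff y) hfix _)
    (fderiv_apply_eq_of_eq_comp_prodMk (hGdiff _) (hρdiff z) hfix _)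
    (hGτ z (ρ z)) (hρbd y i)

/-- Derivative-difference estimate (A.1) for the fixed point `ρ(y) = G(y, ρ(y))`
(chain rule, proof of Theorem 3.1): if `|∂_τ G| ≤ 1/2` everywhere and `|∂_i ρ| ≤ M`,
then for all `y, z` and each coordinate direction `i`,
`|∂_i ρ(y) - ∂_i ρ(z)| ≤ 2 |∂_{y^i} G(y, ρ(y)) - ∂_{y^i} G(z, ρ(z))|
  + 2M |∂_τ G(y, ρ(y)) - ∂_τ G(z, ρ(z))|`. -/
theorem fixed_point_gradient_difference (d : ℕ) (hd : 1 ≤ d) (M : ℝ) (hM : 0 ≤ M)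
    (G : EuclideanSpace ℝ (Fin d) × ℝ → ℝ) (ρ : EuclideanSpace ℝ (Fin d) → ℝ)
    (hGdiff : Differentiable ℝ G) (hρdiff : Differentiable ℝ ρ)
    (hfix : ∀ y, ρ y = G (y, ρ y))
    (hGτ : ∀ (y : EuclideanSpace ℝ (Fin d)) (τ : ℝ),
      |fderiv ℝ G (y, τ) ((0 : EuclideanSpace ℝ (Fin d)), (1 : ℝ))| ≤ 1 / 2)
    (hρbd : ∀ (y : EuclideanSpace ℝ (Fin d)) (i : Fin d),
      |fderiv ℝ ρ y (EuclideanSpace.single i 1)| ≤ M) :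
    ∀ (y z : EuclideanSpace ℝ (Fin d)) (i : Fin d),
      |fderiv ℝ ρ y (EuclideanSpace.single i 1) -
          fderiv ℝ ρ z (EuclideanSpace.single i 1)| ≤
        2 * |fderiv ℝ G (y, ρ y) ((EuclideanSpace.single i 1 : EuclideanSpace ℝ (Fin d)), (0 : ℝ)) -
              fderiv ℝ G (z, ρ z) ((EuclideanSpace.single i 1 : EuclideanSpace ℝ (Fin d)), (0 : ℝ))| +
        2 * M * |fderiv ℝ G (y, ρ y) ((0 : EuclideanSpace ℝ (Fin d)), (1 : ℝ)) -
              fderiv ℝ G (z, ρ z) ((0 : EuclideanSpace ℝ (Fin d)), (1 : ℝ))| :=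
  fixed_point_gradient_difference_general d M G ρ hGdiff hρdiff hfix hGτ hρbd
end

section
/- Let d ≥ 2, M > 0, and ε₀ > 0. Let ψ : ℝ^{d−1} → ℝ be continuously differentiable with ‖Dψ(x') − Dψ(z')‖ ≤ 3ε₀ for all x', z' ∈ ℝ^{d−1}, and suppose g(y) := ψ(y') − y^d is Lipschitz with constant M/2 on ℝ^d. Let φ : ℝ^d → [0,∞) be smooth, supported in the closed unit ball B₁, with ∫ φ = 1, and set G(y, τ) := ∫_{B₁} g(y − (τ/M) w) φ(w) dw. Let ρ : ℝ^d → ℝ be differentiable, Lipschitz with constant M, and satisfy ρ(y) = G(y, ρ(y)) for all y ∈ ℝ^d. Then for all y, z ∈ ℝ^d and each i ∈ {1,…,d}, |∂_i ρ(y) − ∂_i ρ(z)| ≤ 12 ε₀. -/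
open MeasureTheory

variable {d : ℕ}

noncomputable def gam (M : ℝ) (ρ : EuclideanSpace ℝ (Fin d) → ℝ)
    (h y : EuclideanSpace ℝ (Fin d)) (t s : ℝ) (w : EuclideanSpace ℝ (Fin d)) :
    EuclideanSpace ℝ (Fin d) :=
  (y - (ρ y / M) • w) + s • (t • h - ((ρ (y + t • h) - ρ y) / M) • w)

theorem gam_continuous (M : ℝ) (ρ : EuclideanSpace ℝ (Fin d) → ℝ)
    (h y : EuclideanSpace ℝ (Fin d)) (t : ℝ) :
    Continuous (fun p : EuclideanSpace ℝ (Fin d) × ℝ => gam M ρ h y t p.2 p.1) := by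
  unfold gam; fun_prop

noncomputable def aco (M : ℝ) (g φ ρ : EuclideanSpace ℝ (Fin d) → ℝ)
    (h y : EuclideanSpace ℝ (Fin d)) (t : ℝ) : ℝ :=
  ∫ w in Metric.closedBall (0 : EuclideanSpace ℝ (Fin d)) 1,
    (∫ s in (0:ℝ)..1, fderiv ℝ g (gam M ρ h y t s w) h) * φ w

noncomputable def bco (M : ℝ) (g φ ρ : EuclideanSpace ℝ (Fin d) → ℝ)
    (h y : EuclideanSpace ℝ (Fin d)) (t : ℝ) : ℝ :=
  ∫ w in Metric.closedBall (0 : EuclideanSpace ℝ (Fin d)) 1,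
    (∫ s in (0:ℝ)..1, fderiv ℝ g (gam M ρ h y t s w) w) * φ w

theorem cont_inner (g : EuclideanSpace ℝ (Fin d) → ℝ)
    (hgc : Continuous (fderiv ℝ g)) (M : ℝ) (ρ : EuclideanSpace ℝ (Fin d) → ℝ)
    (h y : EuclideanSpace ℝ (Fin d)) (t : ℝ)
    (V : EuclideanSpace ℝ (Fin d) → EuclideanSpace ℝ (Fin d)) (hV : Continuous V) :
    Continuous fun w => ∫ s in (0:ℝ)..1, fderiv ℝ g (gam M ρ h y t s w) (V w) := by
  apply intervalIntegral.continuous_parametric_intervalIntegral_of_continuous'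
  · exact isBoundedBilinearMap_apply.continuous.comp
      ((hgc.comp (gam_continuous M ρ h y t)).prodMk (hV.comp continuous_fst))

theorem ident (M : ℝ) (hM : 0 < M) (g φ : EuclideanSpace ℝ (Fin d) → ℝ)
    (hgd : Differentiable ℝ g) (hgc : Continuous (fderiv ℝ g)) (hφc : Continuous φ)
    (G : EuclideanSpace ℝ (Fin d) → ℝ → ℝ)
    (hG : G = fun y τ => ∫ w in Metric.closedBall (0 : EuclideanSpace ℝ (Fin d)) 1,
      g (y - (τ / M) • w) * φ w)
    (ρ : EuclideanSpace ℝ (Fin d) → ℝ) (hfix : ∀ y, ρ y = G y (ρ y))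
    (h y : EuclideanSpace ℝ (Fin d)) (t : ℝ) :
    ρ (y + t • h) - ρ y = t * aco M g φ ρ h y t
      - ((ρ (y + t • h) - ρ y) / M) * bco M g φ ρ h y t := by
  have hB : IsCompact (Metric.closedBall (0 : EuclideanSpace ℝ (Fin d)) 1) :=
    isCompact_closedBall 0 1
  set x := y + t • h with hx
  set τ := ρ x with hτ
  set σ := ρ y with hσ
  set c : ℝ := (τ - σ) / M with hc
  -- step 1 : difference of the mollified integrals
  have hgcont : Continuous g := hgd.continuous
  have int1 : IntegrableOn (fun w => g (x - (τ / M) • w) * φ w)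
      (Metric.closedBall (0 : EuclideanSpace ℝ (Fin d)) 1) :=
    (((hgcont.comp (by fun_prop)).mul hφc)).continuousOn.integrableOn_compact hB
  have int2 : IntegrableOn (fun w => g (y - (σ / M) • w) * φ w)
      (Metric.closedBall (0 : EuclideanSpace ℝ (Fin d)) 1) :=
    (((hgcont.comp (by fun_prop)).mul hφc)).continuousOn.integrableOn_compact hB
  have step1 : ρ x - ρ y = ∫ w in Metric.closedBall (0 : EuclideanSpace ℝ (Fin d)) 1,
      (g (x - (τ / M) • w) - g (y - (σ / M) • w)) * φ w := by
    calc ρ x - ρ y = G x (ρ x) - G y (ρ y) := by rw [← hfix, ← hfix]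
    _ = _ := by
        rw [hG]
        rw [← integral_sub int1 int2]
        congr 1; ext w; ring
  -- step 2 : FTC along the segment, for each w
  have step2 : ∀ w : EuclideanSpace ℝ (Fin d),
      g (x - (τ / M) • w) - g (y - (σ / M) • w)
        = ∫ s in (0:ℝ)..1, fderiv ℝ g (gam M ρ h y t s w) (t • h - c • w) := by
    intro w
    set p := y - (σ / M) • w with hp
    set v : EuclideanSpace ℝ (Fin d) := t • h - c • w with hv
    have hgam : ∀ s : ℝ, gam M ρ h y t s w = p + s • v := by
      intro s; rfl
    have hend : x - (τ / M) • w = p + v := by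
      rw [hp, hv, hx, hc]
      have : (τ / M) • w = (σ / M) • w + ((τ - σ) / M) • w := by
        rw [← add_smul]; congr 1; ring
      rw [this]; abel
    have hder : ∀ s ∈ Set.uIcc (0:ℝ) 1,
        HasDerivAt (fun s : ℝ => g (p + s • v)) (fderiv ℝ g (p + s • v) v) s := by
      intro s _
      have h1 : HasDerivAt (fun s : ℝ => p + s • v) v s := by
        simpa using ((hasDerivAt_id s).smul_const v).const_add p
      exact (hgd (p + s • v)).hasFDerivAt.comp_hasDerivAt s h1
    have hcont : IntervalIntegrable (fun s => fderiv ℝ g (p + s • v) v) volume 0 1 := by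
      apply Continuous.intervalIntegrable
      exact isBoundedBilinearMap_apply.continuous.comp
        ((hgc.comp (by fun_prop)).prodMk continuous_const)
    have := intervalIntegral.integral_eq_sub_of_hasDerivAt hder hcont
    simp only [hgam]
    rw [this, hend]
    simp
  -- step 3 : linearity of the derivative and of the integrals
  have step3 : ∀ u : EuclideanSpace ℝ (Fin d), ∀ w,
      fderiv ℝ g u (t • h - c • w) = t * fderiv ℝ g u h - c * fderiv ℝ g u w := by
    intro u w
    rw [map_sub, ContinuousLinearMap.map_smul, ContinuousLinearMap.map_smul]; rfl
  have contgam : ∀ V : EuclideanSpace ℝ (Fin d) → EuclideanSpace ℝ (Fin d), Continuous V →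
      ∀ w, Continuous (fun s => fderiv ℝ g (gam M ρ h y t s w) (V w)) := by
    intro V hV w
    exact isBoundedBilinearMap_apply.continuous.comp
      ((hgc.comp ((gam_continuous M ρ h y t).comp
        (continuous_const.prodMk continuous_id))).prodMk continuous_const)
  have step4 : ∀ w : EuclideanSpace ℝ (Fin d),
      (∫ s in (0:ℝ)..1, fderiv ℝ g (gam M ρ h y t s w) (t • h - c • w))
        = t * (∫ s in (0:ℝ)..1, fderiv ℝ g (gam M ρ h y t s w) h)
          - c * (∫ s in (0:ℝ)..1, fderiv ℝ g (gam M ρ h y t s w) w) := by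
    intro w
    have e1 : ∀ s : ℝ, fderiv ℝ g (gam M ρ h y t s w) (t • h - c • w)
        = t * fderiv ℝ g (gam M ρ h y t s w) h - c * fderiv ℝ g (gam M ρ h y t s w) w :=
      fun s => step3 _ w
    rw [intervalIntegral.integral_congr (fun s _ => e1 s)]
    rw [intervalIntegral.integral_sub (f := fun s => t * fderiv ℝ g (gam M ρ h y t s w) h)
      (g := fun s => c * fderiv ℝ g (gam M ρ h y t s w) w)
      ((continuous_const.mul (contgam (fun _ => h) continuous_const w)).intervalIntegrable 0 1)
      ((continuous_const.mul (contgam (fun _ => w) continuous_const w)).intervalIntegrable 0 1),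
      intervalIntegral.integral_const_mul, intervalIntegral.integral_const_mul]
  -- step 5 : assembling
  have intIA : IntegrableOn (fun w =>
      (∫ s in (0:ℝ)..1, fderiv ℝ g (gam M ρ h y t s w) h) * φ w)
      (Metric.closedBall (0 : EuclideanSpace ℝ (Fin d)) 1) :=
    ((cont_inner g hgc M ρ h y t (fun _ => h) continuous_const).mul
      hφc).continuousOn.integrableOn_compact hB
  have intIB : IntegrableOn (fun w =>
      (∫ s in (0:ℝ)..1, fderiv ℝ g (gam M ρ h y t s w) w) * φ w)
      (Metric.closedBall (0 : EuclideanSpace ℝ (Fin d)) 1) :=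
    ((cont_inner g hgc M ρ h y t id continuous_id).mul
      hφc).continuousOn.integrableOn_compact hB
  rw [step1]
  have : ∀ w : EuclideanSpace ℝ (Fin d),
      (g (x - (τ / M) • w) - g (y - (σ / M) • w)) * φ w
        = t * ((∫ s in (0:ℝ)..1, fderiv ℝ g (gam M ρ h y t s w) h) * φ w)
          - c * ((∫ s in (0:ℝ)..1, fderiv ℝ g (gam M ρ h y t s w) w) * φ w) := by
    intro w
    rw [step2 w, step4 w]; ring
  rw [setIntegral_congr_fun (measurableSet_closedBall) (fun w _ => this w)]
  rw [integral_sub (intIA.const_mul t) (intIB.const_mul c),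
    integral_const_mul, integral_const_mul]
  rfl

theorem cont_inner_s (g : EuclideanSpace ℝ (Fin d) → ℝ)
    (hgc : Continuous (fderiv ℝ g)) (M : ℝ) (ρ : EuclideanSpace ℝ (Fin d) → ℝ)
    (h y : EuclideanSpace ℝ (Fin d)) (t : ℝ)
    (v w : EuclideanSpace ℝ (Fin d)) :
    Continuous fun s => fderiv ℝ g (gam M ρ h y t s w) v :=
  isBoundedBilinearMap_apply.continuous.comp
    ((hgc.comp ((gam_continuous M ρ h y t).comp
      (continuous_const.prodMk continuous_id))).prodMk continuous_const)

theorem intbound (φ : EuclideanSpace ℝ (Fin d) → ℝ) (hφc : Continuous φ)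
    (hφ0 : ∀ w, 0 ≤ φ w)
    (hφB : ∫ w in Metric.closedBall (0 : EuclideanSpace ℝ (Fin d)) 1, φ w = 1)
    (f : EuclideanSpace ℝ (Fin d) → ℝ) (hfc : Continuous f) (C : ℝ) (hC : 0 ≤ C)
    (hb : ∀ w ∈ Metric.closedBall (0 : EuclideanSpace ℝ (Fin d)) 1, |f w| ≤ C) :
    |∫ w in Metric.closedBall (0 : EuclideanSpace ℝ (Fin d)) 1, f w * φ w| ≤ C := by
  have hB : IsCompact (Metric.closedBall (0 : EuclideanSpace ℝ (Fin d)) 1) :=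
    isCompact_closedBall 0 1
  have hint : IntegrableOn (fun w => f w * φ w)
      (Metric.closedBall (0 : EuclideanSpace ℝ (Fin d)) 1) :=
    (hfc.mul hφc).continuousOn.integrableOn_compact hB
  calc |∫ w in Metric.closedBall (0 : EuclideanSpace ℝ (Fin d)) 1, f w * φ w|
      ≤ ∫ w in Metric.closedBall (0 : EuclideanSpace ℝ (Fin d)) 1, |f w| * |φ w| := by
        simpa [Real.norm_eq_abs] using
          norm_integral_le_integral_norm (μ := volume.restrict
            (Metric.closedBall (0 : EuclideanSpace ℝ (Fin d)) 1)) (fun w => f w * φ w)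
    _ ≤ ∫ w in Metric.closedBall (0 : EuclideanSpace ℝ (Fin d)) 1, C * φ w := by
        apply setIntegral_mono_on ((hfc.abs.mul hφc.abs).continuousOn.integrableOn_compact hB)
          ((hφc.continuousOn.integrableOn_compact hB).const_mul C) measurableSet_closedBall
        intro w hw
        show |f w| * |φ w| ≤ C * φ w
        rw [abs_of_nonneg (hφ0 w)]
        exact mul_le_mul_of_nonneg_right (hb w hw) (hφ0 w)
    _ = C := by rw [integral_const_mul, hφB, mul_one]

theorem single_bound (M : ℝ) (hM : 0 ≤ M)
    (g φ ρ : EuclideanSpace ℝ (Fin d) → ℝ) (hgc : Continuous (fderiv ℝ g))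
    (hDgn : ∀ u, ‖fderiv ℝ g u‖ ≤ M / 2)
    (hφc : Continuous φ) (hφ0 : ∀ w, 0 ≤ φ w)
    (hφB : ∫ w in Metric.closedBall (0 : EuclideanSpace ℝ (Fin d)) 1, φ w = 1)
    (h y : EuclideanSpace ℝ (Fin d)) (t : ℝ)
    (V : EuclideanSpace ℝ (Fin d) → EuclideanSpace ℝ (Fin d)) (hV : Continuous V)
    (hVb : ∀ w ∈ Metric.closedBall (0 : EuclideanSpace ℝ (Fin d)) 1, ‖V w‖ ≤ 1) :
    |∫ w in Metric.closedBall (0 : EuclideanSpace ℝ (Fin d)) 1,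
      (∫ s in (0:ℝ)..1, fderiv ℝ g (gam M ρ h y t s w) (V w)) * φ w| ≤ M / 2 := by
  apply intbound φ hφc hφ0 hφB _ (cont_inner g hgc M ρ h y t V hV) _ (by linarith)
  intro w hw
  rw [← Real.norm_eq_abs]
  have := intervalIntegral.norm_integral_le_of_norm_le_const (a := (0:ℝ)) (b := 1)
    (C := M / 2) (f := fun s => fderiv ℝ g (gam M ρ h y t s w) (V w)) ?_
  · simpa using this
  · intro s _
    calc ‖fderiv ℝ g (gam M ρ h y t s w) (V w)‖
        ≤ ‖fderiv ℝ g (gam M ρ h y t s w)‖ * ‖V w‖ := ContinuousLinearMap.le_opNorm _ _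
      _ ≤ M / 2 * 1 := mul_le_mul (hDgn _) (hVb w hw) (norm_nonneg _) (by linarith)
      _ = M / 2 := mul_one _

theorem osc_bound (M K : ℝ) (hK : 0 ≤ K)
    (g φ ρ : EuclideanSpace ℝ (Fin d) → ℝ) (hgc : Continuous (fderiv ℝ g))
    (hosc : ∀ u₁ u₂ v, |fderiv ℝ g u₁ v - fderiv ℝ g u₂ v| ≤ K * ‖v‖)
    (hφc : Continuous φ) (hφ0 : ∀ w, 0 ≤ φ w)
    (hφB : ∫ w in Metric.closedBall (0 : EuclideanSpace ℝ (Fin d)) 1, φ w = 1)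
    (h y z : EuclideanSpace ℝ (Fin d)) (t : ℝ)
    (V : EuclideanSpace ℝ (Fin d) → EuclideanSpace ℝ (Fin d)) (hV : Continuous V)
    (hVb : ∀ w ∈ Metric.closedBall (0 : EuclideanSpace ℝ (Fin d)) 1, ‖V w‖ ≤ 1) :
    |(∫ w in Metric.closedBall (0 : EuclideanSpace ℝ (Fin d)) 1,
        (∫ s in (0:ℝ)..1, fderiv ℝ g (gam M ρ h y t s w) (V w)) * φ w)
      - ∫ w in Metric.closedBall (0 : EuclideanSpace ℝ (Fin d)) 1,
        (∫ s in (0:ℝ)..1, fderiv ℝ g (gam M ρ h z t s w) (V w)) * φ w| ≤ K := by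
  have hB : IsCompact (Metric.closedBall (0 : EuclideanSpace ℝ (Fin d)) 1) :=
    isCompact_closedBall 0 1
  have int1 : IntegrableOn (fun w =>
      (∫ s in (0:ℝ)..1, fderiv ℝ g (gam M ρ h y t s w) (V w)) * φ w)
      (Metric.closedBall (0 : EuclideanSpace ℝ (Fin d)) 1) :=
    ((cont_inner g hgc M ρ h y t V hV).mul hφc).continuousOn.integrableOn_compact hB
  have int2 : IntegrableOn (fun w =>
      (∫ s in (0:ℝ)..1, fderiv ℝ g (gam M ρ h z t s w) (V w)) * φ w)
      (Metric.closedBall (0 : EuclideanSpace ℝ (Fin d)) 1) :=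
    ((cont_inner g hgc M ρ h z t V hV).mul hφc).continuousOn.integrableOn_compact hB
  rw [← integral_sub int1 int2]
  have hfactor : ∀ w : EuclideanSpace ℝ (Fin d),
      (∫ s in (0:ℝ)..1, fderiv ℝ g (gam M ρ h y t s w) (V w)) * φ w
        - (∫ s in (0:ℝ)..1, fderiv ℝ g (gam M ρ h z t s w) (V w)) * φ w
      = ((∫ s in (0:ℝ)..1, fderiv ℝ g (gam M ρ h y t s w) (V w))
          - (∫ s in (0:ℝ)..1, fderiv ℝ g (gam M ρ h z t s w) (V w))) * φ w := by
    intro w; ring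
  rw [setIntegral_congr_fun measurableSet_closedBall (fun w _ => hfactor w)]
  apply intbound φ hφc hφ0 hφB _
    ((cont_inner g hgc M ρ h y t V hV).sub (cont_inner g hgc M ρ h z t V hV)) _ hK
  intro w hw
  simp only [Pi.sub_apply]
  rw [← intervalIntegral.integral_sub
    ((cont_inner_s g hgc M ρ h y t (V w) w).intervalIntegrable 0 1)
    ((cont_inner_s g hgc M ρ h z t (V w) w).intervalIntegrable 0 1)]
  rw [← Real.norm_eq_abs]
  have := intervalIntegral.norm_integral_le_of_norm_le_const (a := (0:ℝ)) (b := 1) (C := K)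
    (f := fun s => fderiv ℝ g (gam M ρ h y t s w) (V w)
      - fderiv ℝ g (gam M ρ h z t s w) (V w)) ?_
  · simpa using this
  · intro s _
    rw [Real.norm_eq_abs]
    calc |fderiv ℝ g (gam M ρ h y t s w) (V w) - fderiv ℝ g (gam M ρ h z t s w) (V w)|
        ≤ K * ‖V w‖ := hosc _ _ _
      _ ≤ K * 1 := mul_le_mul_of_nonneg_left (hVb w hw) hK
      _ = K := mul_one _


section Main
variable {d : ℕ}

noncomputable def projCLM (d : ℕ) (hdd : d - 1 ≤ d) :
    EuclideanSpace ℝ (Fin d) →L[ℝ] EuclideanSpace ℝ (Fin (d - 1)) :=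
  LinearMap.toContinuousLinearMap
    { toFun := fun y => (WithLp.toLp 2 (fun i => y (Fin.castLE hdd i)) : EuclideanSpace ℝ (Fin (d - 1)))
      map_add' := fun _ _ => rfl
      map_smul' := fun _ _ => rfl }

theorem projCLM_apply (hdd : d - 1 ≤ d) (y : EuclideanSpace ℝ (Fin d)) :
    projCLM d hdd y = WithLp.toLp 2 (fun i => y (Fin.castLE hdd i)) := rfl

theorem norm_projCLM_le (hdd : d - 1 ≤ d) (y : EuclideanSpace ℝ (Fin d)) :
    ‖projCLM d hdd y‖ ≤ ‖y‖ := by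
  rw [EuclideanSpace.norm_eq, EuclideanSpace.norm_eq]
  apply Real.sqrt_le_sqrt
  rw [projCLM_apply]
  simp only [PiLp.toLp_apply]
  have h1 : ∑ i : Fin (d-1), ‖y (Fin.castLE hdd i)‖ ^ 2
      = ∑ j ∈ Finset.univ.image (Fin.castLE hdd), ‖y j‖ ^ 2 := by
    rw [Finset.sum_image (by intro a _ b _ hab; exact Fin.castLE_injective hdd hab)]
  rw [h1]
  exact Finset.sum_le_sum_of_subset_of_nonneg (Finset.subset_univ _)
    (fun j _ _ => by positivity)

/-- Small oscillation of the gradient of the regularized distance (property (3.2),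
Appendix A): with `g(y) = ψ(y') - y^d`, `ψ ∈ C¹` with `‖Dψ(x') - Dψ(z')‖ ≤ 3ε₀`,
`g` Lipschitz with constant `M/2`, `G(y,τ) = ∫_{B₁} g(y - (τ/M) w) φ(w) dw` the
mollification by a smooth probability kernel `φ` supported in the closed unit ball,
and `ρ` a differentiable `M`-Lipschitz fixed point of `ρ(y) = G(y, ρ(y))`, one has
`|∂_i ρ(y) - ∂_i ρ(z)| ≤ 12 ε₀` for all `y, z` and all `i`. -/
theorem regularized_distance_gradient_oscillation (d : ℕ) (hd : 2 ≤ d)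
    (M ε₀ : ℝ) (hM : 0 < M) (hε₀ : 0 < ε₀)
    (ψ : EuclideanSpace ℝ (Fin (d - 1)) → ℝ) (hψ : ContDiff ℝ 1 ψ)
    (hψosc : ∀ x' z' : EuclideanSpace ℝ (Fin (d - 1)),
      ‖fderiv ℝ ψ x' - fderiv ℝ ψ z'‖ ≤ 3 * ε₀)
    (φ : EuclideanSpace ℝ (Fin d) → ℝ) (hφ : ContDiff ℝ (⊤ : ℕ∞) φ)
    (hφ0 : ∀ w, 0 ≤ φ w)
    (hφsupp : Function.support φ ⊆ Metric.closedBall (0 : EuclideanSpace ℝ (Fin d)) 1)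
    (hφ1 : ∫ w, φ w = 1)
    (g : EuclideanSpace ℝ (Fin d) → ℝ)
    (hg : g = fun y => ψ (WithLp.toLp 2 (fun i => y (Fin.castLE (by omega) i))) - y ⟨d - 1, by omega⟩)
    (hgLip : ∀ y z, |g y - g z| ≤ M / 2 * ‖y - z‖)
    (G : EuclideanSpace ℝ (Fin d) → ℝ → ℝ)
    (hG : G = fun y τ => ∫ w in Metric.closedBall (0 : EuclideanSpace ℝ (Fin d)) 1,
      g (y - (τ / M) • w) * φ w)
    (ρ : EuclideanSpace ℝ (Fin d) → ℝ) (hρdiff : Differentiable ℝ ρ)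
    (hρLip : ∀ y z, |ρ y - ρ z| ≤ M * ‖y - z‖)
    (hfix : ∀ y, ρ y = G y (ρ y)) :
    ∀ (y z : EuclideanSpace ℝ (Fin d)) (i : Fin d),
      |fderiv ℝ ρ y (EuclideanSpace.single i 1) -
        fderiv ℝ ρ z (EuclideanSpace.single i 1)| ≤ 12 * ε₀ := by
  intro y z i
  have hdd : d - 1 ≤ d := by omega
  set π := projCLM d hdd with hπ
  set L : EuclideanSpace ℝ (Fin d) →L[ℝ] ℝ :=
    EuclideanSpace.proj (⟨d - 1, by omega⟩ : Fin d) with hLdef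
  -- derivative of g
  have hDg : ∀ u, HasFDerivAt g ((fderiv ℝ ψ (π u)).comp π - L) u := by
    intro u
    rw [hg]
    exact (((hψ.differentiable one_ne_zero) (π u)).hasFDerivAt.comp u π.hasFDerivAt).sub
      L.hasFDerivAt
  have hgd : Differentiable ℝ g := fun u => (hDg u).differentiableAt
  have hfg : ∀ u, fderiv ℝ g u = (fderiv ℝ ψ (π u)).comp π - L := fun u => (hDg u).fderiv
  have hgc : Continuous (fderiv ℝ g) := by
    have : (fderiv ℝ g) = fun u => ((fderiv ℝ ψ (π u)).comp π - L) := funext hfg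
    rw [this]
    exact (((ContinuousLinearMap.compL ℝ (EuclideanSpace ℝ (Fin d))
      (EuclideanSpace ℝ (Fin (d-1))) ℝ).flip π).continuous.comp
      ((hψ.continuous_fderiv one_ne_zero).comp π.continuous)).sub continuous_const
  have hDgn : ∀ u, ‖fderiv ℝ g u‖ ≤ M / 2 := by
    intro u
    rw [hfg u]
    exact (hDg u).le_of_lip' (by linarith)
      (Filter.Eventually.of_forall fun x => by
        simpa [Real.norm_eq_abs] using hgLip x u)
  have hosc : ∀ u₁ u₂ v, |fderiv ℝ g u₁ v - fderiv ℝ g u₂ v| ≤ (3 * ε₀) * ‖v‖ := by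
    intro u₁ u₂ v
    rw [hfg u₁, hfg u₂]
    have e : ((fderiv ℝ ψ (π u₁)).comp π - L) v - ((fderiv ℝ ψ (π u₂)).comp π - L) v
        = (fderiv ℝ ψ (π u₁) - fderiv ℝ ψ (π u₂)) (π v) := by
      simp
    rw [e, ← Real.norm_eq_abs]
    calc ‖(fderiv ℝ ψ (π u₁) - fderiv ℝ ψ (π u₂)) (π v)‖
        ≤ ‖fderiv ℝ ψ (π u₁) - fderiv ℝ ψ (π u₂)‖ * ‖π v‖ :=
          ContinuousLinearMap.le_opNorm _ _
      _ ≤ (3 * ε₀) * ‖v‖ := by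
          apply mul_le_mul (hψosc _ _) (norm_projCLM_le hdd v) (norm_nonneg _)
          positivity
  have hφc : Continuous φ := hφ.continuous
  have hφB : ∫ w in Metric.closedBall (0 : EuclideanSpace ℝ (Fin d)) 1, φ w = 1 := by
    rw [← integral_indicator measurableSet_closedBall,
      Set.indicator_eq_self.2 hφsupp, hφ1]
  set h : EuclideanSpace ℝ (Fin d) := EuclideanSpace.single i 1 with hhdef
  have hnh : ‖h‖ = 1 := by rw [hhdef, EuclideanSpace.norm_single, norm_one]
  -- the key uniform estimate on difference quotients
  have key : ∀ t : ℝ, t ≠ 0 →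
      |(ρ (y + t • h) - ρ y) / t - (ρ (z + t • h) - ρ z) / t| ≤ 12 * ε₀ := by
    intro t ht
    set qy := (ρ (y + t • h) - ρ y) / t with hqy
    set qz := (ρ (z + t • h) - ρ z) / t with hqz
    have hΔy : ρ (y + t • h) - ρ y = t * qy := by rw [hqy]; field_simp
    have hΔz : ρ (z + t • h) - ρ z = t * qz := by rw [hqz]; field_simp
    have d1 := ident M hM g φ hgd hgc hφc G hG ρ hfix h y t
    have d2 := ident M hM g φ hgd hgc hφc G hG ρ hfix h z t
    rw [hΔy] at d1
    rw [hΔz] at d2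
    set A₁ := aco M g φ ρ h y t
    set A₂ := aco M g φ ρ h z t
    set B₁ := bco M g φ ρ h y t
    set B₂ := bco M g φ ρ h z t
    have E1 : qy * (M + B₁) = A₁ * M := by
      apply mul_left_cancel₀ ht
      have hMne : M ≠ 0 := ne_of_gt hM
      field_simp at d1
      linear_combination t * d1
    have E2 : qz * (M + B₂) = A₂ * M := by
      apply mul_left_cancel₀ ht
      have hMne : M ≠ 0 := ne_of_gt hM
      field_simp at d2
      linear_combination t * d2
    have hwball : ∀ w ∈ Metric.closedBall (0 : EuclideanSpace ℝ (Fin d)) 1,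
        ‖(fun w => w) w‖ ≤ 1 := by
      intro w hw
      simpa [dist_zero_right] using hw
    have hhball : ∀ w ∈ Metric.closedBall (0 : EuclideanSpace ℝ (Fin d)) 1,
        ‖(fun _ => h) w‖ ≤ 1 := fun w _ => le_of_eq hnh
    have hB1 : |B₁| ≤ M / 2 :=
      single_bound M hM.le g φ ρ hgc hDgn hφc hφ0 hφB h y t (fun w => w) continuous_id hwball
    have hA : |A₁ - A₂| ≤ 3 * ε₀ :=
      osc_bound M (3 * ε₀) (by positivity) g φ ρ hgc hosc hφc hφ0 hφB h y z t
        (fun _ => h) continuous_const hhball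
    have hBo : |B₁ - B₂| ≤ 3 * ε₀ :=
      osc_bound M (3 * ε₀) (by positivity) g φ ρ hgc hosc hφc hφ0 hφB h y z t
        (fun w => w) continuous_id hwball
    have hqzb : |qz| ≤ M := by
      have h1 : |ρ (z + t • h) - ρ z| ≤ M * |t| := by
        have := hρLip (z + t • h) z
        rw [add_sub_cancel_left, norm_smul, hnh, mul_one] at this
        simpa [Real.norm_eq_abs] using this
      rw [hqz, abs_div]
      rw [div_le_iff₀ (abs_pos.2 ht)]
      linarith
    have hMB : M / 2 ≤ M + B₁ := by
      have := (abs_le.1 hB1).1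
      linarith
    have E3 : (qy - qz) * (M + B₁) = (A₁ - A₂) * M + qz * (B₂ - B₁) := by
      linear_combination E1 - E2
    have h1 : |qy - qz| * (M + B₁) ≤ 6 * ε₀ * M := by
      calc |qy - qz| * (M + B₁) = |(qy - qz) * (M + B₁)| := by
            rw [abs_mul, abs_of_nonneg (show (0:ℝ) ≤ M + B₁ by linarith)]
        _ = |(A₁ - A₂) * M + qz * (B₂ - B₁)| := by rw [E3]
        _ ≤ |A₁ - A₂| * M + |qz| * |B₂ - B₁| := by
            refine (abs_add_le _ _).trans (add_le_add ?_ ?_)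
            · rw [abs_mul, abs_of_pos hM]
            · rw [abs_mul]
        _ ≤ 3 * ε₀ * M + M * (3 * ε₀) := by
            have hBo' : |B₂ - B₁| ≤ 3 * ε₀ := by rwa [abs_sub_comm]
            refine add_le_add (mul_le_mul_of_nonneg_right hA hM.le) ?_
            exact mul_le_mul hqzb hBo' (abs_nonneg _) hM.le
        _ = 6 * ε₀ * M := by ring
    have h2 : |qy - qz| * (M / 2) ≤ 6 * ε₀ * M :=
      le_trans (mul_le_mul_of_nonneg_left hMB (abs_nonneg _)) h1
    rw [show (6:ℝ) * ε₀ * M = 12 * ε₀ * (M / 2) by ring] at h2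
    exact le_of_mul_le_mul_right h2 (by linarith)
  -- pass to the limit in the difference quotients
  have hlim : ∀ u : EuclideanSpace ℝ (Fin d),
      Filter.Tendsto (fun t : ℝ => (ρ (u + t • h) - ρ u) / t) (nhdsWithin 0 {0}ᶜ)
        (nhds (fderiv ℝ ρ u h)) := by
    intro u
    have h1 : HasDerivAt (fun t : ℝ => u + t • h) h 0 := by
      simpa using ((hasDerivAt_id (0:ℝ)).smul_const h).const_add u
    have H : HasDerivAt (fun t : ℝ => ρ (u + t • h)) (fderiv ℝ ρ u h) 0 := by
      have := (hρdiff (u + (0:ℝ) • h)).hasFDerivAt.comp_hasDerivAt 0 h1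
      simp at this; exact this
    have := hasDerivAt_iff_tendsto_slope.1 H
    apply this.congr
    intro t
    rw [slope_def_field]
    simp [div_eq_inv_mul]
  have hfinal := (hlim y).sub (hlim z)
  have habs := hfinal.abs
  apply le_of_tendsto habs
  filter_upwards [self_mem_nhdsWithin] with t ht
  exact key t ht

end Main
end

section
/- Let ε > 0, p ∈ [1,∞), β ∈ (0,1) with β ≤ 1 − (2+ε)/p, and R > 0. Let Ω = {(x, y) ∈ ℝ² : x > |y|^{1+ε}} and let B_R denote the open ball of radius R centered at the origin in ℝ². Then the function (x, y) ↦ |y|^{β−1} is not in L_p(Ω ∩ B_R); equivalently, ∫_{Ω ∩ B_R} |y|^{(β−1)p} dx dy = ∞. -/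
/-!
In coordinates `(y, x)` the set `Ω ∩ B_R` contains, for `0 < y < δ`, the segment
`y^{1+ε} < x < 2 y^{1+ε}` of length `y^{1+ε}`. By Tonelli the integral of `|y|^{(β-1)p}` over
this region is `∫_0^δ y^{(β-1)p + 1 + ε} dy`, which diverges because `(β-1)p + 1 + ε ≤ -1`.
-/

open MeasureTheory Set

theorem MeasureTheory.setLIntegral_regionBetween_comp_fst {α : Type*} [MeasurableSpace α]
    {μ : Measure α} {f g : α → ℝ} {s : Set α} (hf : Measurable f)
    (hg : Measurable g) (hs : MeasurableSet s) {φ : α → ENNReal} (hφ : Measurable φ) :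
    ∫⁻ z in regionBetween f g s, φ z.1 ∂μ.prod volume =
      ∫⁻ x in s, φ x * ENNReal.ofReal (g x - f x) ∂μ := by
  rw [← withDensity_apply _ (measurableSet_regionBetween hf hg hs), ← prod_withDensity_left hφ,
    volume_regionBetween_eq_lintegral' hf hg hs,
    setLIntegral_withDensity_eq_setLIntegral_mul _ hφ (by fun_prop) hs]
  rfl

theorem lintegral_rpow_Ioo_zero_eq_top {r δ : ℝ} (hr : r ≤ -1) (hδ : 0 < δ) :
    ∫⁻ y in Ioo 0 δ, ENNReal.ofReal (y ^ r) = ⊤ := by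
  by_contra h
  have hnonneg : 0 ≤ᵐ[volume.restrict (Ioo 0 δ)] fun y : ℝ => y ^ r :=
    ae_restrict_of_forall_mem measurableSet_Ioo fun y hy => Real.rpow_nonneg hy.1.le r
  have hint : IntegrableOn (fun y : ℝ => y ^ r) (Ioo 0 δ) :=
    (lintegral_ofReal_ne_top_iff_integrable (by fun_prop) hnonneg).1 h
  linarith [(intervalIntegral.integrableOn_Ioo_rpow_iff hδ).1 hint]

/-- Coordinates `(y, x)` on the plane, with `y = v 1` first so that regions `f y < x < g y` are
`regionBetween f g`. -/
noncomputable def EuclideanSpace.measurableEquivYX : EuclideanSpace ℝ (Fin 2) ≃ᵐ ℝ × ℝ :=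
  ((MeasurableEquiv.toLp 2 (Fin 2 → ℝ)).symm.trans MeasurableEquiv.finTwoArrow).trans
    MeasurableEquiv.prodComm

theorem EuclideanSpace.measurePreserving_measurableEquivYX :
    MeasurePreserving EuclideanSpace.measurableEquivYX :=
  Measure.measurePreserving_swap.comp ((volume_preserving_finTwoArrow ℝ).comp
    (EuclideanSpace.volume_preserving_symm_measurableEquiv_toLp (Fin 2)))

theorem regionBetween_subset_measurableEquivYX_preimage_cusp_inter_ball {ε R : ℝ}
    (hε : 0 < ε) (hR : 0 < R) :
    regionBetween (fun y => y ^ (1 + ε)) (fun y => 2 * y ^ (1 + ε)) (Ioo 0 (min (R / 3) 1)) ⊆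
      EuclideanSpace.measurableEquivYX.symm ⁻¹'
        ({v | |v 1| ^ (1 + ε) < v 0} ∩ Metric.ball 0 R) := by
  rintro ⟨y, x⟩ ⟨⟨hy0, hyδ⟩, hx_gt, hx_lt⟩
  -- `y < 1` gives `x < 2 y^{1+ε} ≤ 2y < 2R/3`, and with `y < R/3` the point lies in `B_R`.
  have hyR : y < R / 3 := hyδ.trans_le (min_le_left _ _)
  have hy_pow_le : y ^ (1 + ε) ≤ y :=
    Real.rpow_le_self_of_le_one hy0.le (hyδ.trans_le (min_le_right _ _)).le (by linarith)
  refine ⟨?_, ?_⟩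
  · show |y| ^ (1 + ε) < x
    rwa [abs_of_pos hy0]
  · rw [mem_ball_zero_iff, ← sq_lt_sq₀ (norm_nonneg _) hR.le,
      EuclideanSpace.real_norm_sq_eq, Fin.sum_univ_two]
    show x ^ 2 + y ^ 2 < R ^ 2
    nlinarith [Real.rpow_pos_of_pos hy0 (1 + ε)]

theorem lintegral_abs_rpow_cusp_inter_ball_eq_top {ε R q : ℝ} (hε : 0 < ε) (hR : 0 < R)
    (hq : q ≤ -(2 + ε)) :
    ∫⁻ v in {v : EuclideanSpace ℝ (Fin 2) | |v 1| ^ (1 + ε) < v 0} ∩ Metric.ball 0 R,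
      ENNReal.ofReal (|v 1| ^ q) = ⊤ := by
  set δ := min (R / 3) 1
  have hδ : 0 < δ := lt_min (by positivity) one_pos
  have hregion : ∫⁻ z in regionBetween (fun y => y ^ (1 + ε)) (fun y => 2 * y ^ (1 + ε))
      (Ioo 0 δ), ENNReal.ofReal (|z.1| ^ q) = ⊤ := by
    rw [Measure.volume_eq_prod, setLIntegral_regionBetween_comp_fst (by fun_prop) (by fun_prop)
      measurableSet_Ioo (φ := fun y => ENNReal.ofReal (|y| ^ q)) (by fun_prop),
      ← lintegral_rpow_Ioo_zero_eq_top (show q + (1 + ε) ≤ -1 by linarith) hδ]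
    refine setLIntegral_congr_fun measurableSet_Ioo fun y hy => ?_
    rw [abs_of_pos hy.1, two_mul, add_sub_cancel_right, ← ENNReal.ofReal_mul (Real.rpow_nonneg hy.1.le q),
      ← Real.rpow_add hy.1]
  rw [← (EuclideanSpace.measurePreserving_measurableEquivYX.symm _).setLIntegral_comp_preimage_emb
    (MeasurableEquiv.measurableEmbedding _), eq_top_iff, ← hregion]
  exact lintegral_mono_set (regionBetween_subset_measurableEquivYX_preimage_cusp_inter_ball hε hR)

theorem Real.enorm_rpow_rpow_of_nonneg {x : ℝ} (hx : 0 ≤ x) (a : ℝ) {p : ℝ} (hp : 0 ≤ p) :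
    ‖x ^ a‖ₑ ^ p = ENNReal.ofReal (x ^ (a * p)) := by
  rw [Real.enorm_eq_ofReal (Real.rpow_nonneg hx a),
    ENNReal.ofReal_rpow_of_nonneg (Real.rpow_nonneg hx a) hp, ← Real.rpow_mul hx]

theorem cusp_counterexample_not_Lp_general (ε p β R : ℝ) (hε : 0 < ε) (hp : 1 ≤ p)
    (hβp : β ≤ 1 - (2 + ε) / p) (hR : 0 < R)
    (Ω : Set (EuclideanSpace ℝ (Fin 2)))
    (hΩ : Ω = {v : EuclideanSpace ℝ (Fin 2) | |v 1| ^ (1 + ε) < v 0}) :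
    ¬ MemLp (fun v : EuclideanSpace ℝ (Fin 2) => |v 1| ^ (β - 1))
        (ENNReal.ofReal p)
        (volume.restrict (Ω ∩ Metric.ball (0 : EuclideanSpace ℝ (Fin 2)) R)) ∧
    ∫⁻ v in Ω ∩ Metric.ball (0 : EuclideanSpace ℝ (Fin 2)) R,
        ENNReal.ofReal (|v 1| ^ ((β - 1) * p)) = ⊤ := by
  subst hΩ
  have hp0 : 0 < p := by linarith
  have hq : (β - 1) * p ≤ -(2 + ε) := by
    have := (div_le_iff₀ hp0).1 (show (2 + ε) / p ≤ 1 - β by linarith)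
    linarith
  have hdiv := lintegral_abs_rpow_cusp_inter_ball_eq_top hε hR hq
  refine ⟨fun hmem => ?_, hdiv⟩
  have hfin := lintegral_rpow_enorm_lt_top_of_eLpNorm_lt_top (by simpa using hp0)
    ENNReal.ofReal_ne_top hmem.2
  simp only [ENNReal.toReal_ofReal hp0.le, Real.enorm_rpow_rpow_of_nonneg (abs_nonneg _) _ hp0.le, hdiv] at hfin
  exact lt_irrefl _ hfin

/-- Non-integrability claim `D₁₂u ∉ L_p` of the counterexample in Remark 2.4: for
`ε > 0`, `p ∈ [1,∞)`, `β ∈ (0,1)` with `β ≤ 1 - (2+ε)/p`, and `R > 0`, the function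
`(x,y) ↦ |y|^{β-1}` is not in `L_p(Ω ∩ B_R)`, i.e.
`∫_{Ω ∩ B_R} |y|^{(β-1)p} = ∞`, where `Ω = {(x,y) ∈ ℝ² : x > |y|^{1+ε}}` and `B_R` is
the ball of radius `R` centered at the origin. -/
theorem cusp_counterexample_not_Lp (ε p β R : ℝ) (hε : 0 < ε) (hp : 1 ≤ p)
    (hβ0 : 0 < β) (hβ1 : β < 1) (hβp : β ≤ 1 - (2 + ε) / p) (hR : 0 < R)
    (Ω : Set (EuclideanSpace ℝ (Fin 2)))
    (hΩ : Ω = {v : EuclideanSpace ℝ (Fin 2) | |v 1| ^ (1 + ε) < v 0}) :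
    ¬ MemLp (fun v : EuclideanSpace ℝ (Fin 2) => |v 1| ^ (β - 1))
        (ENNReal.ofReal p)
        (volume.restrict (Ω ∩ Metric.ball (0 : EuclideanSpace ℝ (Fin 2)) R)) ∧
    ∫⁻ v in Ω ∩ Metric.ball (0 : EuclideanSpace ℝ (Fin 2)) R,
        ENNReal.ofReal (|v 1| ^ ((β - 1) * p)) = ⊤ :=
  cusp_counterexample_not_Lp_general ε p β R hε hp hβp hR Ω hΩ
end
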